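/- arXiv:1804.04878 — 12 statements merged into one kernel-verified Lean document; each statement's English description precedes it below -/
import Mathlib

section
/- Let n be a positive natural number, let f : ℝⁿ → ℝⁿ be differentiable, and let τ > 0 be such that for every x ∈ ℝⁿ and every v ∈ ℝⁿ, ⟨(Df(x))v, v⟩ ≤ −τ‖v‖² (i.e., the symmetric part of the Jacobian of f is everywhere ⪯ −τI). If x, y : ℝ → ℝⁿ are two differentiable trajectories of the dynamical system ẋ = f(x), i.e., x'(t) = f(x(t)) and y'(t) = f(y(t)) for all t, then for all t ≥ 0, ‖x(t) − y(t)‖ ≤ e^{−τt}‖x(0) − y(0)‖. -/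
open scoped RealInnerProductSpace

/-- One-sided Lipschitz / monotonicity estimate from the Jacobian bound. -/
lemma inner_sub_le_of_contr
    (n : ℕ)
    (f : EuclideanSpace ℝ (Fin n) → EuclideanSpace ℝ (Fin n))
    (hf : Differentiable ℝ f) (τ : ℝ)
    (hcontr : ∀ (x v : EuclideanSpace ℝ (Fin n)), ⟪fderiv ℝ f x v, v⟫ ≤ -τ * ‖v‖ ^ 2)
    (a b : EuclideanSpace ℝ (Fin n)) :
    ⟪f a - f b, a - b⟫ ≤ -τ * ‖a - b‖ ^ 2 := by
  set v := a - b with hv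
  -- ψ s = ⟪f (b + s • v), v⟫ + τ ‖v‖² s is antitone
  have key : ∀ s : ℝ, HasDerivAt (fun s : ℝ => ⟪f (b + s • v), v⟫ + τ * ‖v‖ ^ 2 * s)
      (⟪fderiv ℝ f (b + s • v) v, v⟫ + τ * ‖v‖ ^ 2) s := by
    intro s
    have hc : HasDerivAt (fun s : ℝ => b + s • v) v s := by
      simpa using ((hasDerivAt_id s).smul_const v).const_add b
    have hfc : HasDerivAt (fun s : ℝ => f (b + s • v)) (fderiv ℝ f (b + s • v) v) s :=
      (hf (b + s • v)).hasFDerivAt.comp_hasDerivAt s hc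
    have h1 := hfc.inner ℝ (hasDerivAt_const s v)
    simp only [inner_zero_right, zero_add, add_zero] at h1
    have h2 : HasDerivAt (fun s : ℝ => τ * ‖v‖ ^ 2 * s) (τ * ‖v‖ ^ 2) s := by
      simpa using (hasDerivAt_id s).const_mul (τ * ‖v‖ ^ 2)
    exact h1.add h2
  have hanti : Antitone (fun s : ℝ => ⟪f (b + s • v), v⟫ + τ * ‖v‖ ^ 2 * s) := by
    apply antitone_of_deriv_nonpos
    · intro s; exact (key s).differentiableAt
    · intro s
      rw [(key s).deriv]
      have := hcontr (b + s • v) v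
      linarith
  have h01 := hanti (show (0:ℝ) ≤ 1 by norm_num)
  simp only [zero_smul, add_zero, one_smul, mul_one, mul_zero] at h01
  have hab : b + v = a := by rw [hv]; abel
  rw [hab] at h01
  have : ⟪f a, v⟫ - ⟪f b, v⟫ ≤ -τ * ‖v‖ ^ 2 := by linarith
  rwa [← inner_sub_left] at this

theorem contracting_vector_field_incremental_stability
    (n : ℕ) (hn : 0 < n)
    (f : EuclideanSpace ℝ (Fin n) → EuclideanSpace ℝ (Fin n))
    (hf : Differentiable ℝ f)
    (τ : ℝ) (hτ : 0 < τ)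
    (hcontr : ∀ (x v : EuclideanSpace ℝ (Fin n)), ⟪fderiv ℝ f x v, v⟫ ≤ -τ * ‖v‖ ^ 2)
    (x y : ℝ → EuclideanSpace ℝ (Fin n))
    (hx : Differentiable ℝ x) (hy : Differentiable ℝ y)
    (hx' : ∀ t, deriv x t = f (x t)) (hy' : ∀ t, deriv y t = f (y t)) :
    ∀ t : ℝ, 0 ≤ t → ‖x t - y t‖ ≤ Real.exp (-τ * t) * ‖x 0 - y 0‖ := by
  intro t ht
  set z : ℝ → EuclideanSpace ℝ (Fin n) := fun t => x t - y t with hz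
  have hzderiv : ∀ s, HasDerivAt z (f (x s) - f (y s)) s := by
    intro s
    have h1 : HasDerivAt x (f (x s)) s := by
      have := (hx s).hasDerivAt; rwa [hx' s] at this
    have h2 : HasDerivAt y (f (y s)) s := by
      have := (hy s).hasDerivAt; rwa [hy' s] at this
    exact h1.sub h2
  -- h s = exp (2τ s) * ‖z s‖²
  have key : ∀ s : ℝ, HasDerivAt (fun s : ℝ => Real.exp (2 * τ * s) * ‖z s‖ ^ 2)
      (2 * τ * Real.exp (2 * τ * s) * ‖z s‖ ^ 2
        + Real.exp (2 * τ * s) * (2 * ⟪f (x s) - f (y s), z s⟫)) s := by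
    intro s
    have he : HasDerivAt (fun s : ℝ => Real.exp (2 * τ * s)) (2 * τ * Real.exp (2 * τ * s)) s := by
      have h := ((hasDerivAt_id s).const_mul (2 * τ)).exp
      simp only [id_eq, mul_one] at h
      convert h using 1
      ring
    have hn : HasDerivAt (fun s : ℝ => ‖z s‖ ^ 2) (2 * ⟪f (x s) - f (y s), z s⟫) s := by
      have := ((hzderiv s).inner ℝ (hzderiv s))
      have hnorm : (fun s => ⟪z s, z s⟫) = fun s => ‖z s‖ ^ 2 := by
        funext u; rw [real_inner_self_eq_norm_sq]
      rw [hnorm] at this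
      refine this.congr_deriv ?_
      rw [real_inner_comm (z s)]
      ring
    exact he.mul hn
  have hanti : AntitoneOn (fun s : ℝ => Real.exp (2 * τ * s) * ‖z s‖ ^ 2) (Set.Ici 0) := by
    apply antitoneOn_of_deriv_nonpos (convex_Ici 0)
    · exact (Continuous.continuousOn (by continuity : Continuous fun s : ℝ => Real.exp (2*τ*s))).mul
        ((continuous_norm.comp ((hx.sub hy).continuous)).pow 2).continuousOn
    · intro s _; exact (key s).differentiableAt.differentiableWithinAt
    · intro s _
      rw [(key s).deriv]
      have h1 : ⟪f (x s) - f (y s), z s⟫ ≤ -τ * ‖z s‖ ^ 2 :=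
        inner_sub_le_of_contr n f hf τ hcontr (x s) (y s)
      have he : 0 < Real.exp (2 * τ * s) := Real.exp_pos _
      nlinarith [he, h1]
  have hmain : Real.exp (2 * τ * t) * ‖z t‖ ^ 2 ≤ ‖z 0‖ ^ 2 := by
    have := hanti (Set.self_mem_Ici) (Set.mem_Ici.2 ht) ht
    simpa using this
  have hsq : ‖z t‖ ^ 2 ≤ (Real.exp (-τ * t) * ‖z 0‖) ^ 2 := by
    have he : 0 < Real.exp (2 * τ * t) := Real.exp_pos _
    have : (Real.exp (-τ * t) * ‖z 0‖) ^ 2 = Real.exp (-(2 * τ * t)) * ‖z 0‖ ^ 2 := by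
      rw [mul_pow, ← Real.exp_nat_mul]; ring_nf
    rw [this, Real.exp_neg]
    have hmain' : ‖z t‖ ^ 2 ≤ ‖z 0‖ ^ 2 / Real.exp (2 * τ * t) :=
      (le_div_iff₀ he).2 (by rw [mul_comm]; exact hmain)
    calc ‖z t‖ ^ 2 ≤ ‖z 0‖ ^ 2 / Real.exp (2 * τ * t) := hmain'
      _ = (Real.exp (2 * τ * t))⁻¹ * ‖z 0‖ ^ 2 := by rw [div_eq_inv_mul]
  have h1 : 0 ≤ ‖z t‖ := norm_nonneg _
  have h2 : 0 ≤ Real.exp (-τ * t) * ‖z 0‖ := mul_nonneg (Real.exp_pos _).le (norm_nonneg _)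
  nlinarith [hsq, h1, h2]
end

section
/- Let n be a positive natural number, let f : ℝⁿ → ℝⁿ be differentiable, and let τ > 0 be such that for every x ∈ ℝⁿ and every v ∈ ℝⁿ, ⟨(Df(x))v, v⟩ ≤ −τ‖v‖². If x, y : ℝ → ℝⁿ are differentiable with x'(t) = f(x(t)) and y'(t) = f(y(t)) for all t, then the squared distance g(t) := ‖x(t) − y(t)‖² is differentiable with g'(t) = 2⟨f(x(t)) − f(y(t)), x(t) − y(t)⟩, and it satisfies the differential inequality g'(t) ≤ −2τ g(t) for all t. -/
open scoped RealInnerProductSpace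

theorem squared_distance_differential_inequality
    (n : ℕ) (hn : 0 < n)
    (f : EuclideanSpace ℝ (Fin n) → EuclideanSpace ℝ (Fin n))
    (hf : Differentiable ℝ f)
    (τ : ℝ) (hτ : 0 < τ)
    (hcontr : ∀ (x v : EuclideanSpace ℝ (Fin n)), ⟪fderiv ℝ f x v, v⟫ ≤ -τ * ‖v‖ ^ 2)
    (x y : ℝ → EuclideanSpace ℝ (Fin n))
    (hx : Differentiable ℝ x) (hy : Differentiable ℝ y)
    (hx' : ∀ t, deriv x t = f (x t)) (hy' : ∀ t, deriv y t = f (y t)) :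
    ∀ t : ℝ,
      HasDerivAt (fun s => ‖x s - y s‖ ^ 2)
        (2 * ⟪f (x t) - f (y t), x t - y t⟫) t ∧
      2 * ⟪f (x t) - f (y t), x t - y t⟫ ≤ -(2 * τ) * ‖x t - y t‖ ^ 2 := by
  -- key contraction estimate
  have key : ∀ a b : EuclideanSpace ℝ (Fin n),
      ⟪f a - f b, a - b⟫ ≤ -τ * ‖a - b‖ ^ 2 := by
    intro a b
    set v := a - b with hv
    rcases eq_or_ne v 0 with h0 | h0
    · simp [h0]
    · set φ : ℝ → ℝ := fun s => ⟪f (b + s • v), v⟫ with hφdef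
      have hφ : ∀ s : ℝ, HasDerivAt φ ⟪fderiv ℝ f (b + s • v) v, v⟫ s := by
        intro s
        have hpath : HasDerivAt (fun s : ℝ => b + s • v) v s := by
          simpa using ((hasDerivAt_id s).smul_const v).const_add b
        have hcomp : HasDerivAt (fun s : ℝ => f (b + s • v))
            (fderiv ℝ f (b + s • v) v) s :=
          (hf.differentiableAt.hasFDerivAt.comp_hasDerivAt s hpath)
        have := hcomp.inner ℝ (hasDerivAt_const s v)
        simpa [inner_zero_right] using this
      obtain ⟨c, _, hc⟩ := exists_hasDerivAt_eq_slope φ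
        (fun s => ⟪fderiv ℝ f (b + s • v) v, v⟫) one_pos
        (fun s _ => (hφ s).continuousAt.continuousWithinAt)
        (fun s _ => hφ s)
      have hφ1 : φ 1 = ⟪f a, v⟫ := by simp [hφdef, hv]
      have hφ0 : φ 0 = ⟪f b, v⟫ := by simp [hφdef]
      have : ⟪f a, v⟫ - ⟪f b, v⟫ ≤ -τ * ‖v‖ ^ 2 := by
        have := hcontr (b + c • v) v
        rw [hφ1, hφ0] at hc
        simp only [sub_zero, div_one] at hc
        linarith
      simpa [inner_sub_left] using this
  intro t
  have hzx : HasDerivAt x (f (x t)) t := by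
    simpa [hx' t] using (hx t).hasDerivAt
  have hzy : HasDerivAt y (f (y t)) t := by
    simpa [hy' t] using (hy t).hasDerivAt
  have hz : HasDerivAt (fun s => x s - y s) (f (x t) - f (y t)) t := hzx.sub hzy
  have hinner : HasDerivAt (fun s => ⟪x s - y s, x s - y s⟫)
      (⟪x t - y t, f (x t) - f (y t)⟫ + ⟪f (x t) - f (y t), x t - y t⟫) t :=
    hz.inner ℝ hz
  have hD : HasDerivAt (fun s => ‖x s - y s‖ ^ 2)
      (2 * ⟪f (x t) - f (y t), x t - y t⟫) t := by
    have heq : (fun s => ‖x s - y s‖ ^ 2) = fun s => ⟪x s - y s, x s - y s⟫ := by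
      funext s; rw [real_inner_self_eq_norm_sq]
    rw [heq]
    convert hinner using 1
    rw [real_inner_comm (x t - y t) (f (x t) - f (y t))]
    ring
  refine ⟨hD, ?_⟩
  have := key (x t) (y t)
  nlinarith
end

section
/- Let n be a positive natural number, let f : ℝⁿ → ℝⁿ be differentiable, and let τ > 0 be such that for every x ∈ ℝⁿ and every v ∈ ℝⁿ, ⟨(Df(x))v, v⟩ ≤ −τ‖v‖² (global contraction). Then f has at most one equilibrium: if f(x⋆) = 0 and f(y⋆) = 0, then x⋆ = y⋆. -/
open scoped RealInnerProductSpace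

theorem contracting_vector_field_unique_equilibrium
    (n : ℕ) (hn : 0 < n)
    (f : EuclideanSpace ℝ (Fin n) → EuclideanSpace ℝ (Fin n))
    (hf : Differentiable ℝ f)
    (τ : ℝ) (hτ : 0 < τ)
    (hcontr : ∀ (x v : EuclideanSpace ℝ (Fin n)), ⟪fderiv ℝ f x v, v⟫ ≤ -τ * ‖v‖ ^ 2)
    (xstar ystar : EuclideanSpace ℝ (Fin n))
    (hx : f xstar = 0) (hy : f ystar = 0) :
    xstar = ystar := by
  set v : EuclideanSpace ℝ (Fin n) := ystar - xstar with hv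
  set γ : ℝ → EuclideanSpace ℝ (Fin n) := fun t => xstar + t • v with hγ
  set g : ℝ → ℝ := fun t => ⟪v, f (γ t)⟫ with hg
  have hγd : ∀ t : ℝ, HasDerivAt γ v t := by
    intro t
    simpa [hγ] using ((hasDerivAt_id t).smul_const v).const_add xstar
  have hgd : ∀ t : ℝ, HasDerivAt g ⟪fderiv ℝ f (γ t) v, v⟫ t := by
    intro t
    have h1 : HasDerivAt (fun t => f (γ t)) (fderiv ℝ f (γ t) v) t :=
      (hf (γ t)).hasFDerivAt.comp_hasDerivAt t (hγd t)
    have h2 : HasDerivAt g ⟪v, fderiv ℝ f (γ t) v⟫ t :=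
      (innerSL ℝ v).hasFDerivAt.comp_hasDerivAt t h1
    rwa [real_inner_comm] at h2
  have hmvt : ∃ c ∈ Set.Ioo (0:ℝ) 1, ⟪fderiv ℝ f (γ c) v, v⟫ = g 1 - g 0 := by
    have := exists_hasDerivAt_eq_slope g (fun t => ⟪fderiv ℝ f (γ t) v, v⟫) one_pos
      (fun t _ => (hgd t).continuousAt.continuousWithinAt)
      (fun t _ => hgd t)
    obtain ⟨c, hc, heq⟩ := this
    exact ⟨c, hc, by simpa using heq⟩
  obtain ⟨c, _, heq⟩ := hmvt
  have hg1 : g 1 = 0 := by simp [hg, hγ, hv, hy]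
  have hg0 : g 0 = 0 := by simp [hg, hγ, hx]
  have h0 : ⟪fderiv ℝ f (γ c) v, v⟫ = 0 := by
    simpa [hg1, hg0] using heq
  have hle := hcontr (γ c) v
  have : τ * ‖v‖ ^ 2 ≤ 0 := by nlinarith [hle, h0]
  have hv0 : v = 0 := by
    by_contra hne
    have : 0 < ‖v‖ ^ 2 := pow_pos (norm_pos_iff.mpr hne) 2
    nlinarith
  have := sub_eq_zero.mp hv0
  exact this.symm
end

section
/- Let n be a positive natural number, let f : ℝⁿ → ℝⁿ be differentiable, let τ > 0 be such that for every x ∈ ℝⁿ and every v ∈ ℝⁿ, ⟨(Df(x))v, v⟩ ≤ −τ‖v‖², and let x⋆ ∈ ℝⁿ satisfy f(x⋆) = 0. Then for every differentiable trajectory x : ℝ → ℝⁿ with x'(t) = f(x(t)) for all t, one has ‖x(t) − x⋆‖ ≤ e^{−τt}‖x(0) − x⋆‖ for all t ≥ 0; in particular x(t) → x⋆ as t → ∞. -/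
open scoped RealInnerProductSpace

theorem contracting_vector_field_convergence_to_equilibrium
    (n : ℕ) (hn : 0 < n)
    (f : EuclideanSpace ℝ (Fin n) → EuclideanSpace ℝ (Fin n))
    (hf : Differentiable ℝ f)
    (τ : ℝ) (hτ : 0 < τ)
    (hcontr : ∀ (x v : EuclideanSpace ℝ (Fin n)), ⟪fderiv ℝ f x v, v⟫ ≤ -τ * ‖v‖ ^ 2)
    (xstar : EuclideanSpace ℝ (Fin n)) (hstar : f xstar = 0)
    (x : ℝ → EuclideanSpace ℝ (Fin n))
    (hx : Differentiable ℝ x)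
    (hx' : ∀ t, deriv x t = f (x t)) :
    (∀ t : ℝ, 0 ≤ t → ‖x t - xstar‖ ≤ Real.exp (-τ * t) * ‖x 0 - xstar‖) ∧
      Filter.Tendsto x Filter.atTop (nhds xstar) := by
  -- Step 1: one-sided Lipschitz estimate
  have key : ∀ a b : EuclideanSpace ℝ (Fin n),
      ⟪f a - f b, a - b⟫ ≤ -τ * ‖a - b‖ ^ 2 := by
    intro a b
    set v := a - b with hv
    have hc : ∀ s : ℝ, HasDerivAt (fun s : ℝ => b + s • v) v s := by
      intro s
      simpa using ((hasDerivAt_id s).smul_const v).const_add b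
    have hg : ∀ s : ℝ,
        HasDerivAt (fun s : ℝ => ⟪f (b + s • v), v⟫ + (τ * ‖v‖ ^ 2) * s)
          (⟪fderiv ℝ f (b + s • v) v, v⟫ + τ * ‖v‖ ^ 2) s := by
      intro s
      have h1 : HasDerivAt (fun s : ℝ => f (b + s • v)) (fderiv ℝ f (b + s • v) v) s :=
        (hf (b + s • v)).hasFDerivAt.comp_hasDerivAt s (hc s)
      have h2 := h1.inner ℝ (hasDerivAt_const s v)
      simp only [inner_zero_right, zero_add] at h2
      have h3 : HasDerivAt (fun s : ℝ => (τ * ‖v‖ ^ 2) * s) (τ * ‖v‖ ^ 2) s := by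
        simpa using (hasDerivAt_id s).const_mul (τ * ‖v‖ ^ 2)
      exact h2.add h3
    have hanti : Antitone (fun s : ℝ => ⟪f (b + s • v), v⟫ + (τ * ‖v‖ ^ 2) * s) := by
      refine antitone_of_deriv_nonpos (fun s => (hg s).differentiableAt) (fun s => ?_)
      rw [(hg s).deriv]
      have := hcontr (b + s • v) v
      nlinarith
    have h01 := hanti (by norm_num : (0:ℝ) ≤ 1)
    simp only [one_smul, zero_smul, add_zero, mul_one, mul_zero] at h01
    have hb1 : b + v = a := by rw [hv]; abel
    rw [hb1] at h01
    rw [inner_sub_left]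
    linarith
  -- Step 2: derivative of the squared norm
  have hu : ∀ t : ℝ, HasDerivAt (fun t => ‖x t - xstar‖ ^ 2)
      (2 * ⟪f (x t), x t - xstar⟫) t := by
    intro t
    have hd : HasDerivAt (fun t => x t - xstar) (f (x t)) t := by
      have := (hx t).hasDerivAt
      rw [hx' t] at this
      exact this.sub_const xstar
    have h2 := hd.inner ℝ hd
    have heq : (fun t => ⟪x t - xstar, x t - xstar⟫) = fun t => ‖x t - xstar‖ ^ 2 := by
      funext t; rw [real_inner_self_eq_norm_sq]
    rw [heq] at h2
    have : ⟪x t - xstar, f (x t)⟫ + ⟪f (x t), x t - xstar⟫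
        = 2 * ⟪f (x t), x t - xstar⟫ := by
      rw [real_inner_comm]; ring
    rwa [this] at h2
  -- Step 3: the exponentially weighted squared norm is antitone
  have hw : ∀ t : ℝ, HasDerivAt (fun t => Real.exp (2 * τ * t) * ‖x t - xstar‖ ^ 2)
      (2 * τ * Real.exp (2 * τ * t) * ‖x t - xstar‖ ^ 2
        + Real.exp (2 * τ * t) * (2 * ⟪f (x t), x t - xstar⟫)) t := by
    intro t
    have he : HasDerivAt (fun t : ℝ => Real.exp (2 * τ * t)) (Real.exp (2 * τ * t) * (2 * τ)) t := by
      have : HasDerivAt (fun t : ℝ => 2 * τ * t) (2 * τ) t := by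
        simpa using (hasDerivAt_id t).const_mul (2 * τ)
      exact this.exp
    have := he.mul (hu t)
    have heq : 2 * τ * Real.exp (2 * τ * t) * ‖x t - xstar‖ ^ 2
        + Real.exp (2 * τ * t) * (2 * ⟪f (x t), x t - xstar⟫)
        = Real.exp (2 * τ * t) * (2 * τ) * ‖x t - xstar‖ ^ 2
        + Real.exp (2 * τ * t) * (2 * ⟪f (x t), x t - xstar⟫) := by ring
    rw [heq]; exact this
  have hwanti : Antitone (fun t => Real.exp (2 * τ * t) * ‖x t - xstar‖ ^ 2) := by
    refine antitone_of_deriv_nonpos (fun t => (hw t).differentiableAt) (fun t => ?_)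
    rw [(hw t).deriv]
    have hk := key (x t) xstar
    rw [hstar, sub_zero] at hk
    have hep := Real.exp_pos (2 * τ * t)
    nlinarith
  -- Step 4: the exponential decay estimate
  have hbound : ∀ t : ℝ, 0 ≤ t → ‖x t - xstar‖ ≤ Real.exp (-τ * t) * ‖x 0 - xstar‖ := by
    intro t ht
    have h0 := hwanti ht
    simp only [mul_zero, Real.exp_zero, one_mul] at h0
    have hsq : ‖x t - xstar‖ ^ 2 ≤ (Real.exp (-τ * t) * ‖x 0 - xstar‖) ^ 2 := by
      have hmul : Real.exp (-τ * t) * Real.exp (-τ * t) * Real.exp (2 * τ * t) = 1 := by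
        rw [← Real.exp_add, ← Real.exp_add, ← Real.exp_zero]
        congr 1; ring
      have hep := Real.exp_pos (-τ * t)
      nlinarith [norm_nonneg (x t - xstar)]
    have h1 : (0:ℝ) ≤ ‖x t - xstar‖ := norm_nonneg _
    have h2 : (0:ℝ) ≤ Real.exp (-τ * t) * ‖x 0 - xstar‖ :=
      mul_nonneg (Real.exp_pos _).le (norm_nonneg _)
    nlinarith
  refine ⟨hbound, ?_⟩
  -- Step 5: convergence
  rw [tendsto_iff_norm_sub_tendsto_zero]
  have hexp : Filter.Tendsto (fun t : ℝ => Real.exp (-τ * t) * ‖x 0 - xstar‖)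
      Filter.atTop (nhds 0) := by
    have h1 : Filter.Tendsto (fun t : ℝ => -τ * t) Filter.atTop Filter.atBot :=
      Filter.Tendsto.const_mul_atTop_of_neg (neg_neg_iff_pos.mpr hτ) Filter.tendsto_id
    simpa using (Real.tendsto_exp_atBot.comp h1).mul_const ‖x 0 - xstar‖
  refine squeeze_zero' ?_ ?_ hexp
  · exact Filter.Eventually.of_forall fun t => norm_nonneg _
  · filter_upwards [Filter.eventually_ge_atTop 0] with t ht
    exact hbound t ht
end

section
/- Let n be a positive natural number, let f : ℝⁿ → ℝⁿ be differentiable, and let τ : ℝⁿ → ℝ be continuous with τ(x) > 0 for all x, such that for every x ∈ ℝⁿ and every v ∈ ℝⁿ, ⟨(Df(x))v, v⟩ ≤ −τ(x)‖v‖². Let x : ℝ → ℝⁿ be a differentiable trajectory with x'(t) = f(x(t)) for all t, and let δx : ℝ → ℝⁿ be a differentiable virtual displacement along x, i.e., δx'(t) = (Df(x(t)))(δx(t)) for all t. Then for all t ≥ 0, ‖δx(t)‖² ≤ ‖δx(0)‖² · exp(−2∫₀ᵗ τ(x(s)) ds). -/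
open scoped RealInnerProductSpace

theorem virtual_displacement_contraction
    (n : ℕ) (hn : 0 < n)
    (f : EuclideanSpace ℝ (Fin n) → EuclideanSpace ℝ (Fin n))
    (hf : Differentiable ℝ f)
    (τ : EuclideanSpace ℝ (Fin n) → ℝ) (hτcont : Continuous τ)
    (hτpos : ∀ x, 0 < τ x)
    (hcontr : ∀ (x v : EuclideanSpace ℝ (Fin n)),
      ⟪fderiv ℝ f x v, v⟫ ≤ -τ x * ‖v‖ ^ 2)
    (x : ℝ → EuclideanSpace ℝ (Fin n))
    (hx : Differentiable ℝ x)
    (hx' : ∀ t, deriv x t = f (x t))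
    (δx : ℝ → EuclideanSpace ℝ (Fin n))
    (hδx : Differentiable ℝ δx)
    (hδx' : ∀ t, deriv δx t = fderiv ℝ f (x t) (δx t)) :
    ∀ t : ℝ, 0 ≤ t →
      ‖δx t‖ ^ 2 ≤ ‖δx 0‖ ^ 2 * Real.exp (-2 * ∫ s in (0 : ℝ)..t, τ (x s)) := by
  intro t ht
  set I : ℝ → ℝ := fun u => ∫ s in (0 : ℝ)..u, τ (x s) with hIdef
  have hcx : Continuous fun s => τ (x s) := hτcont.comp hx.continuous
  have hI' : ∀ u, HasDerivAt I (τ (x u)) u := fun u =>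
    (hcx.integral_hasStrictDerivAt 0 u).hasDerivAt
  set g : ℝ → ℝ := fun u => ‖δx u‖ ^ 2 * Real.exp (2 * I u) with hgdef
  have hg' : ∀ u, HasDerivAt g
      (2 * Real.exp (2 * I u) *
        (⟪deriv δx u, δx u⟫ + τ (x u) * ‖δx u‖ ^ 2)) u := by
    intro u
    have hδ : HasDerivAt δx (deriv δx u) u := (hδx u).hasDerivAt
    have hN : HasDerivAt (fun u => ‖δx u‖ ^ 2)
        (⟪δx u, deriv δx u⟫ + ⟪deriv δx u, δx u⟫) u := by
      have h := hδ.inner ℝ hδ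
      have heq : (fun u => ⟪δx u, δx u⟫) = fun u => ‖δx u‖ ^ 2 :=
        funext fun u => real_inner_self_eq_norm_sq _
      exact heq ▸ h
    have hE : HasDerivAt (fun u => Real.exp (2 * I u))
        (Real.exp (2 * I u) * (2 * τ (x u))) u :=
      ((hI' u).const_mul 2).exp
    have := hN.mul hE
    refine this.congr_deriv ?_
    have : ⟪δx u, deriv δx u⟫ = ⟪deriv δx u, δx u⟫ := real_inner_comm _ _
    rw [this]; ring
  have hanti : AntitoneOn g (Set.Ici (0 : ℝ)) := by
    apply antitoneOn_of_deriv_nonpos (convex_Ici 0)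
    · exact (Continuous.continuousOn (by
        exact continuous_iff_continuousAt.2 fun u => (hg' u).continuousAt))
    · intro u _
      exact (hg' u).differentiableAt.differentiableWithinAt
    · intro u _
      rw [(hg' u).deriv]
      have h1 : ⟪deriv δx u, δx u⟫ ≤ -τ (x u) * ‖δx u‖ ^ 2 := by
        rw [hδx' u]; exact hcontr (x u) (δx u)
      have h2 : ⟪deriv δx u, δx u⟫ + τ (x u) * ‖δx u‖ ^ 2 ≤ 0 := by linarith
      have h3 : 0 < Real.exp (2 * I u) := Real.exp_pos _
      nlinarith
  have hle : g t ≤ g 0 := hanti (Set.self_mem_Ici) ht ht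
  have hI0 : I 0 = 0 := intervalIntegral.integral_same
  have hg0 : g 0 = ‖δx 0‖ ^ 2 := by simp [hgdef, hI0]
  have hgt : g t = ‖δx t‖ ^ 2 * Real.exp (2 * I t) := rfl
  rw [hg0, hgt] at hle
  have key : Real.exp (-2 * ∫ s in (0:ℝ)..t, τ (x s)) = (Real.exp (2 * I t))⁻¹ := by
    rw [← Real.exp_neg]
    congr 1
    ring
  rw [key]
  have hpos : 0 < Real.exp (2 * I t) := Real.exp_pos _
  have h2 := mul_le_mul_of_nonneg_right hle (le_of_lt (inv_pos.2 hpos))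
  rw [mul_assoc, mul_inv_cancel₀ hpos.ne', mul_one] at h2
  exact h2
end

section
/- Let n be a positive natural number and σ > 0. For all indices i, j ∈ Fin n and all points x, y ∈ ℝⁿ, the mixed second partial derivative ∂²/∂xᵢ∂yⱼ of the scalar Gaussian kernel k_σ(x, y) = exp(−‖x − y‖²/(2σ²)) exists and equals the (i, j) entry of the curl-free kernel: ∂²/∂xᵢ∂yⱼ k_σ(x, y) = (1/σ²) · exp(−‖x − y‖²/(2σ²)) · (δ_{ij} − (xᵢ − yᵢ)(xⱼ − yⱼ)/σ²), where δ_{ij} is 1 if i = j and 0 otherwise. -/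
open scoped BigOperators

lemma normSq_eq_sum {n : ℕ} (v : EuclideanSpace ℝ (Fin n)) :
    ‖v‖ ^ 2 = ∑ l, (v l) ^ 2 := by
  rw [EuclideanSpace.norm_eq, Real.sq_sqrt (by positivity)]
  simp [sq_abs]

lemma sumSq_hasFDerivAt {n : ℕ} (b v : EuclideanSpace ℝ (Fin n)) :
    HasFDerivAt (fun w : EuclideanSpace ℝ (Fin n) => ∑ l, (w l - b l) ^ 2)
      (∑ l, (2 * (v l - b l)) • (EuclideanSpace.proj l : EuclideanSpace ℝ (Fin n) →L[ℝ] ℝ)) v := by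
  apply HasFDerivAt.fun_sum
  intro l _
  have hp : HasFDerivAt (fun w : EuclideanSpace ℝ (Fin n) => w l - b l)
      (EuclideanSpace.proj l : EuclideanSpace ℝ (Fin n) →L[ℝ] ℝ) v :=
    by simpa using ((EuclideanSpace.proj (𝕜 := ℝ) l).hasFDerivAt (x := v)).sub_const (b l)
  have hpow := (hasDerivAt_pow 2 (v l - b l)).comp_hasFDerivAt v hp
  refine HasFDerivAt.congr_fderiv hpow ?_
  simp [smul_smul]

lemma exp_arg_eq {n : ℕ} (σ : ℝ) (b w : EuclideanSpace ℝ (Fin n)) :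
    -‖w - b‖ ^ 2 / (2 * σ ^ 2) = (-(1 / (2 * σ ^ 2))) * ∑ l, (w l - b l) ^ 2 := by
  rw [show ‖w - b‖ ^ 2 = ∑ l, (w l - b l) ^ 2 from by rw [normSq_eq_sum]; simp]
  ring

lemma gauss_hasFDerivAt {n : ℕ} (σ : ℝ) (b v : EuclideanSpace ℝ (Fin n)) :
    HasFDerivAt (fun w : EuclideanSpace ℝ (Fin n) => Real.exp (-‖w - b‖ ^ 2 / (2 * σ ^ 2)))
      (Real.exp (-‖v - b‖ ^ 2 / (2 * σ ^ 2)) •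
        ((-(1 / (2 * σ ^ 2))) • ∑ l, (2 * (v l - b l)) •
          (EuclideanSpace.proj l : EuclideanSpace ℝ (Fin n) →L[ℝ] ℝ))) v := by
  have hfun : (fun w : EuclideanSpace ℝ (Fin n) => Real.exp (-‖w - b‖ ^ 2 / (2 * σ ^ 2)))
      = fun w => Real.exp ((-(1 / (2 * σ ^ 2))) * ∑ l, (w l - b l) ^ 2) := by
    funext w; rw [exp_arg_eq]
  rw [hfun]
  have h1 := (sumSq_hasFDerivAt b v).const_mul (-(1 / (2 * σ ^ 2)))
  have h2 := (Real.hasDerivAt_exp _).comp_hasFDerivAt v h1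
  rw [exp_arg_eq σ b v]
  exact h2

theorem mixed_partials_of_gaussian_kernel_give_curlfree_kernel
    (n : ℕ) (hn : 0 < n) (σ : ℝ) (hσ : 0 < σ) (i j : Fin n)
    (x y : EuclideanSpace ℝ (Fin n)) :
    (∀ x' : EuclideanSpace ℝ (Fin n),
        DifferentiableAt ℝ
          (fun y' : EuclideanSpace ℝ (Fin n) =>
            Real.exp (-‖x' - y'‖ ^ 2 / (2 * σ ^ 2))) y) ∧
    ∃ D : EuclideanSpace ℝ (Fin n) →L[ℝ] ℝ,
      HasFDerivAt
        (fun x' : EuclideanSpace ℝ (Fin n) =>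
          fderiv ℝ
            (fun y' : EuclideanSpace ℝ (Fin n) =>
              Real.exp (-‖x' - y'‖ ^ 2 / (2 * σ ^ 2))) y
            (EuclideanSpace.single j 1))
        D x ∧
      D (EuclideanSpace.single i 1) =
        (1 / σ ^ 2) * Real.exp (-‖x - y‖ ^ 2 / (2 * σ ^ 2)) *
          ((if i = j then (1 : ℝ) else 0) - (x i - y i) * (x j - y j) / σ ^ 2) := by
  have hσ2 : σ ^ 2 ≠ 0 := by positivity
  have hswap : ∀ x' : EuclideanSpace ℝ (Fin n),
      (fun y' : EuclideanSpace ℝ (Fin n) => Real.exp (-‖x' - y'‖ ^ 2 / (2 * σ ^ 2)))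
        = fun y' => Real.exp (-‖y' - x'‖ ^ 2 / (2 * σ ^ 2)) := by
    intro x'; funext y'; rw [norm_sub_rev]
  constructor
  · intro x'
    rw [hswap x']
    exact (gauss_hasFDerivAt σ x' y).differentiableAt
  · -- closed form for the first partial in y_j, as a function of x'
    have hg : (fun x' : EuclideanSpace ℝ (Fin n) =>
        fderiv ℝ (fun y' : EuclideanSpace ℝ (Fin n) =>
          Real.exp (-‖x' - y'‖ ^ 2 / (2 * σ ^ 2))) y (EuclideanSpace.single j 1))
        = fun x' => Real.exp (-‖x' - y‖ ^ 2 / (2 * σ ^ 2)) * ((1 / σ ^ 2) * (x' j - y j)) := by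
      funext x'
      rw [hswap x', (gauss_hasFDerivAt σ x' y).fderiv]
      simp only [ContinuousLinearMap.smul_apply, ContinuousLinearMap.sum_apply,
        PiLp.proj_apply, EuclideanSpace.single_apply, smul_eq_mul, mul_ite,
        mul_one, mul_zero, Finset.sum_ite_eq', Finset.mem_univ, if_true]
      rw [norm_sub_rev]
      field_simp
      ring
    have hd0 : HasFDerivAt (fun x' : EuclideanSpace ℝ (Fin n) => x' j - y j)
        (EuclideanSpace.proj j : EuclideanSpace ℝ (Fin n) →L[ℝ] ℝ) x :=
      by simpa using ((EuclideanSpace.proj (𝕜 := ℝ) j).hasFDerivAt (x := x)).sub_const (y j)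
    have hd := hd0.const_mul (1 / σ ^ 2)
    have hc := gauss_hasFDerivAt σ y x
    have hmul := hc.mul hd
    refine ⟨Real.exp (-‖x - y‖ ^ 2 / (2 * σ ^ 2)) • (1 / σ ^ 2) •
        (EuclideanSpace.proj j : EuclideanSpace ℝ (Fin n) →L[ℝ] ℝ) +
      (1 / σ ^ 2 * (x j - y j)) • Real.exp (-‖x - y‖ ^ 2 / (2 * σ ^ 2)) •
        (-(1 / (2 * σ ^ 2))) • ∑ l, (2 * (x l - y l)) •
          (EuclideanSpace.proj l : EuclideanSpace ℝ (Fin n) →L[ℝ] ℝ), ?_, ?_⟩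
    · rw [hg]; exact hmul
    · simp only [ContinuousLinearMap.add_apply, ContinuousLinearMap.smul_apply,
        ContinuousLinearMap.sum_apply, PiLp.proj_apply,
        EuclideanSpace.single_apply, smul_eq_mul, mul_ite, mul_one, mul_zero,
        Finset.sum_ite_eq', Finset.mem_univ, if_true]
      by_cases hij : i = j
      · subst hij
        simp only [if_pos rfl, eq_self_iff_true, if_true, ↓reduceIte]
        field_simp
        ring
      · simp only [if_neg hij, if_neg (Ne.symm hij)]
        field_simp
        ring
end

section
/- Let n, l be positive natural numbers, σ > 0, and let x₁, …, x_l ∈ ℝⁿ and α₁, …, α_l ∈ ℝⁿ. Define the vector field f : ℝⁿ → ℝⁿ by f(x) = Σ_{i=1}^{l} K_cf(x, xᵢ) αᵢ, where K_cf(x, y) v = (1/σ²) exp(−‖x − y‖²/(2σ²)) ( v − (⟨x − y, v⟩/σ²) (x − y) ), and define the potential V : ℝⁿ → ℝ by V(x) = Σ_{i=1}^{l} (⟨x − xᵢ, αᵢ⟩/σ²) · exp(−‖x − xᵢ‖²/(2σ²)). Then V is differentiable and f is its gradient field: ∇V(x) = f(x) for all x ∈ ℝⁿ. -/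
open scoped RealInnerProductSpace

open InnerProductSpace in
lemma key_term_fderiv {E : Type*} [NormedAddCommGroup E] [InnerProductSpace ℝ E]
    (σ : ℝ) (hσ : 0 < σ) (a b x : E) :
    HasFDerivAt (fun x => (⟪x - a, b⟫ / σ ^ 2) * Real.exp (-‖x - a‖ ^ 2 / (2 * σ ^ 2)))
      (innerSL ℝ (((1 / σ ^ 2) * Real.exp (-‖x - a‖ ^ 2 / (2 * σ ^ 2))) •
        (b - ((⟪x - a, b⟫ / σ ^ 2)) • (x - a)))) x := by
  have hσ2 : (σ : ℝ) ^ 2 ≠ 0 := by positivity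
  have hsub : HasFDerivAt (fun x : E => x - a) (ContinuousLinearMap.id ℝ E) x :=
    (hasFDerivAt_id x).sub_const a
  have hu : HasFDerivAt (fun x : E => ⟪x - a, b⟫ / σ ^ 2)
      ((σ ^ 2)⁻¹ • innerSL ℝ b) x := by
    have h1 : HasFDerivAt (fun x : E => ⟪x - a, b⟫) (innerSL ℝ b) x := by
      have := ((innerSL ℝ b).hasFDerivAt (x := x - a)).comp x hsub
      simpa [Function.comp_def, real_inner_comm] using this
    simpa [div_eq_inv_mul, smul_smul] using h1.const_mul ((σ ^ 2)⁻¹)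
  have hw : HasFDerivAt (fun x : E => -‖x - a‖ ^ 2 / (2 * σ ^ 2))
      ((-(2 * σ ^ 2)⁻¹) • (2 • (innerSL ℝ (x - a)))) x := by
    have h2 : HasFDerivAt (fun x : E => ‖x - a‖ ^ 2)
        (2 • (innerSL ℝ (x - a)).comp (ContinuousLinearMap.id ℝ E)) x := hsub.norm_sq
    have := h2.const_mul (-(2 * σ ^ 2)⁻¹)
    convert this using 1
    · rfl
    · rfl
    · funext y; ring
    · rw [ContinuousLinearMap.comp_id]
  have he : HasFDerivAt (fun x : E => Real.exp (-‖x - a‖ ^ 2 / (2 * σ ^ 2)))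
      (Real.exp (-‖x - a‖ ^ 2 / (2 * σ ^ 2)) • ((-(2 * σ ^ 2)⁻¹) • (2 • (innerSL ℝ (x - a))))) x :=
    (Real.hasDerivAt_exp _).comp_hasFDerivAt x hw
  have hmul := hu.mul he
  convert hmul using 1
  · rfl
  · rfl
  · rfl
  ext y
  simp [inner_sub_left, inner_smul_left, real_inner_comm]
  field_simp
  ring

theorem curlfree_rkhs_vector_field_is_gradient_of_potential
    (n l : ℕ) (hn : 0 < n) (hl : 0 < l) (σ : ℝ) (hσ : 0 < σ)
    (xs : Fin l → EuclideanSpace ℝ (Fin n))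
    (α : Fin l → EuclideanSpace ℝ (Fin n))
    (f : EuclideanSpace ℝ (Fin n) → EuclideanSpace ℝ (Fin n))
    (hfdef : ∀ x, f x = ∑ i, ((1 / σ ^ 2) * Real.exp (-‖x - xs i‖ ^ 2 / (2 * σ ^ 2))) •
        (α i - ((⟪x - xs i, α i⟫ / σ ^ 2)) • (x - xs i)))
    (V : EuclideanSpace ℝ (Fin n) → ℝ)
    (hVdef : ∀ x, V x = ∑ i, (⟪x - xs i, α i⟫ / σ ^ 2) *
        Real.exp (-‖x - xs i‖ ^ 2 / (2 * σ ^ 2))) :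
    ∀ x, HasGradientAt V (f x) x := by
  intro x
  have hVeq : V = fun x => ∑ i, (⟪x - xs i, α i⟫ / σ ^ 2) *
      Real.exp (-‖x - xs i‖ ^ 2 / (2 * σ ^ 2)) := funext hVdef
  rw [hasGradientAt_iff_hasFDerivAt, hVeq]
  have hsum := HasFDerivAt.fun_sum (fun i (_ : i ∈ Finset.univ) =>
    key_term_fderiv σ hσ (xs i) (α i) x)
  convert hsum using 1
  · rfl
  · rfl
  ext y
  simp [hfdef, InnerProductSpace.toDual_apply_apply, sum_inner]
end

section
/- Let n, l be positive natural numbers, σ > 0, and let x₁, …, x_l ∈ ℝⁿ and α₁, …, α_l ∈ ℝⁿ. Define f : ℝⁿ → ℝⁿ by f(x) = Σ_{i=1}^{l} K_cf(x, xᵢ) αᵢ, where K_cf(x, y) v = (1/σ²) exp(−‖x − y‖²/(2σ²)) ( v − (⟨x − y, v⟩/σ²)(x − y) ). Then f is differentiable and its Jacobian is symmetric at every point: for all x, u, v ∈ ℝⁿ, ⟨(Df(x))u, v⟩ = ⟨(Df(x))v, u⟩. -/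
open scoped RealInnerProductSpace
open InnerProductSpace

lemma aux_pot_hasFDerivAt {n : ℕ} (σ : ℝ) (hσ : 0 < σ) (y a x : EuclideanSpace ℝ (Fin n)) :
    HasFDerivAt (fun z : EuclideanSpace ℝ (Fin n) =>
        (1 / σ ^ 2) * Real.exp (-‖z - y‖ ^ 2 / (2 * σ ^ 2)) * ⟪z - y, a⟫)
      (toDual ℝ _ (((1 / σ ^ 2) * Real.exp (-‖x - y‖ ^ 2 / (2 * σ ^ 2))) •
        (a - ((⟪x - y, a⟫ / σ ^ 2)) • (x - y)))) x := by
  have hσ2 : σ ^ 2 ≠ 0 := pow_ne_zero _ hσ.ne'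
  have hw : HasFDerivAt (fun z : EuclideanSpace ℝ (Fin n) => z - y)
      (ContinuousLinearMap.id ℝ _) x := (hasFDerivAt_id x).sub_const y
  have hns := hw.norm_sq
  have hq : HasFDerivAt (fun z : EuclideanSpace ℝ (Fin n) => -‖z - y‖ ^ 2 / (2 * σ ^ 2))
      ((-(2 * σ ^ 2)⁻¹) • (2 • (innerSL ℝ (x - y)).comp (ContinuousLinearMap.id ℝ _))) x := by
    have h1 := hns.const_mul (-(2 * σ ^ 2)⁻¹)
    have : (fun z : EuclideanSpace ℝ (Fin n) => -(2 * σ ^ 2)⁻¹ * ‖z - y‖ ^ 2)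
        = fun z => -‖z - y‖ ^ 2 / (2 * σ ^ 2) := by funext z; ring
    rw [this] at h1
    exact h1
  have hE := (hq.exp.const_mul (1 / σ ^ 2))
  have hp : HasFDerivAt (fun z : EuclideanSpace ℝ (Fin n) => ⟪z - y, a⟫)
      ((innerSL ℝ a).comp (ContinuousLinearMap.id ℝ _)) x := by
    have h2 := ((innerSL ℝ a).hasFDerivAt (x := x - y)).comp x hw
    have : (fun z : EuclideanSpace ℝ (Fin n) => ⟪z - y, a⟫)
        = fun z => innerSL ℝ a (z - y) := by
      funext z; simp only [innerSL_apply_apply]; exact real_inner_comm _ _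
    rw [this]; exact h2
  have hmul := hE.fun_mul hp
  refine hmul.congr_fderiv (Eq.symm ?_)
  ext u
  simp [ContinuousLinearMap.smul_apply, toDual_apply_apply, inner_smul_left, inner_sub_left,
    real_inner_smul_left, smul_smul]
  field_simp
  ring

set_option maxHeartbeats 1000000 in
theorem curlfree_rkhs_vector_field_has_symmetric_jacobian
    (n l : ℕ) (hn : 0 < n) (hl : 0 < l) (σ : ℝ) (hσ : 0 < σ)
    (xs : Fin l → EuclideanSpace ℝ (Fin n))
    (α : Fin l → EuclideanSpace ℝ (Fin n))
    (f : EuclideanSpace ℝ (Fin n) → EuclideanSpace ℝ (Fin n))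
    (hfdef : ∀ x, f x = ∑ i, ((1 / σ ^ 2) * Real.exp (-‖x - xs i‖ ^ 2 / (2 * σ ^ 2))) •
        (α i - ((⟪x - xs i, α i⟫ / σ ^ 2)) • (x - xs i))) :
    Differentiable ℝ f ∧
      ∀ (x u v : EuclideanSpace ℝ (Fin n)),
        ⟪fderiv ℝ f x u, v⟫ = ⟪fderiv ℝ f x v, u⟫ := by
  classical
  have hfc : ContDiff ℝ (⊤ : ℕ∞) f := by
    have heq : f = fun x => ∑ i, ((1 / σ ^ 2) * Real.exp (-‖x - xs i‖ ^ 2 / (2 * σ ^ 2))) •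
        (α i - ((⟪x - xs i, α i⟫ / σ ^ 2)) • (x - xs i)) := funext hfdef
    rw [heq]
    apply ContDiff.sum fun i _ => ?_
    have hw : ContDiff ℝ (⊤ : ℕ∞) (fun x : EuclideanSpace ℝ (Fin n) => x - xs i) :=
      contDiff_id.sub contDiff_const
    have hc : ContDiff ℝ (⊤ : ℕ∞)
        (fun x : EuclideanSpace ℝ (Fin n) =>
          (1 / σ ^ 2) * Real.exp (-‖x - xs i‖ ^ 2 / (2 * σ ^ 2))) :=
      contDiff_const.mul (Real.contDiff_exp.comp (((hw.norm_sq ℝ).neg).div_const _))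
    have hs : ContDiff ℝ (⊤ : ℕ∞)
        (fun x : EuclideanSpace ℝ (Fin n) => ⟪x - xs i, α i⟫ / σ ^ 2) :=
      (hw.inner ℝ contDiff_const).div_const _
    exact hc.smul (contDiff_const.sub (hs.smul hw))
  have hfd : Differentiable ℝ f := hfc.differentiable (by simp)
  refine ⟨hfd, fun x u v => ?_⟩
  set f' : EuclideanSpace ℝ (Fin n) → (EuclideanSpace ℝ (Fin n) →L[ℝ] ℝ) :=
    fun z => InnerProductSpace.toDual ℝ _ (f z) with hf'
  have key : ∀ z, HasFDerivAt (fun w : EuclideanSpace ℝ (Fin n) => ∑ i,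
      (1 / σ ^ 2) * Real.exp (-‖w - xs i‖ ^ 2 / (2 * σ ^ 2)) * ⟪w - xs i, α i⟫) (f' z) z := by
    intro z
    have hz : f' z = ∑ i, InnerProductSpace.toDual ℝ _
        (((1 / σ ^ 2) * Real.exp (-‖z - xs i‖ ^ 2 / (2 * σ ^ 2))) •
          (α i - ((⟪z - xs i, α i⟫ / σ ^ 2)) • (z - xs i))) := by
      rw [hf']
      simp only [hfdef z, map_sum]
    rw [hz]
    exact HasFDerivAt.fun_sum fun i _ => aux_pot_hasFDerivAt σ hσ (xs i) (α i) z
  have hf'd : Differentiable ℝ f' := fun z =>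
    ((InnerProductSpace.toDual ℝ (EuclideanSpace ℝ (Fin n))).differentiableAt).comp z (hfd z)
  have hsymm := second_derivative_symmetric key ((hf'd x).hasFDerivAt)
  have keyrel : ∀ (v u : EuclideanSpace ℝ (Fin n)),
      ⟪fderiv ℝ f x u, v⟫ = fderiv ℝ f' x u v := by
    intro v u
    have hA := HasFDerivAt.inner ℝ (hfd x).hasFDerivAt (hasFDerivAt_const v x)
    have hfun : (fun z : EuclideanSpace ℝ (Fin n) => ⟪f z, v⟫) = fun z => f' z v := by
      funext z
      rw [hf']
      simp [InnerProductSpace.toDual_apply_apply]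
    have hB : HasFDerivAt (fun z : EuclideanSpace ℝ (Fin n) => ⟪f z, v⟫)
        ((ContinuousLinearMap.apply ℝ ℝ v).comp (fderiv ℝ f' x)) x := by
      rw [hfun]
      exact ((ContinuousLinearMap.apply ℝ ℝ v).hasFDerivAt).comp x (hf'd x).hasFDerivAt
    have huniq := hA.unique hB
    have h3 := ContinuousLinearMap.ext_iff.1 huniq u
    simpa using h3
  rw [keyrel v u, keyrel u v]
  exact hsymm u v
end

section
/- Let n, p be positive natural numbers, let K : ℝⁿ → ℝⁿ → Matrix (Fin n) (Fin n) ℝ be a matrix-valued kernel that is positive in the sense that for every finite tuple of points x₁, …, x_m ∈ ℝⁿ the block Gram matrix with (i, j) block K(xᵢ, xⱼ) is positive semidefinite, and let z₁, …, z_p ∈ ℝⁿ be such that the block Gram matrix G = K(Z, Z) is invertible. Define K^Z(x, y) = K(x, y) − K(x, Z) G⁻¹ K(Z, y). Then K^Z is also positive: for every finite tuple of points x₁, …, x_m ∈ ℝⁿ, the block Gram matrix with (i, j) block K^Z(xᵢ, xⱼ) is positive semidefinite. -/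
open Matrix


theorem modified_kernel_is_positive
    (n p : ℕ) (hn : 0 < n) (hp : 0 < p)
    (K : EuclideanSpace ℝ (Fin n) → EuclideanSpace ℝ (Fin n) → Matrix (Fin n) (Fin n) ℝ)
    (hKpos : ∀ (m : ℕ) (xs : Fin m → EuclideanSpace ℝ (Fin n)),
      (Matrix.of fun q r : Fin m × Fin n =>
        K (xs q.1) (xs r.1) q.2 r.2).PosSemidef)
    (z : Fin p → EuclideanSpace ℝ (Fin n))
    (G : Matrix (Fin p × Fin n) (Fin p × Fin n) ℝ)
    (hG : G = Matrix.of fun q r : Fin p × Fin n => K (z q.1) (z r.1) q.2 r.2)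
    (hGinv : IsUnit G.det)
    (KxZ : EuclideanSpace ℝ (Fin n) → Matrix (Fin n) (Fin p × Fin n) ℝ)
    (hKxZ : ∀ x, KxZ x = Matrix.of fun (a : Fin n) (r : Fin p × Fin n) => K x (z r.1) a r.2)
    (KZy : EuclideanSpace ℝ (Fin n) → Matrix (Fin p × Fin n) (Fin n) ℝ)
    (hKZy : ∀ y, KZy y = Matrix.of fun (q : Fin p × Fin n) (b : Fin n) => K (z q.1) y q.2 b)
    (KZ : EuclideanSpace ℝ (Fin n) → EuclideanSpace ℝ (Fin n) → Matrix (Fin n) (Fin n) ℝ)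
    (hKZ : ∀ x y, KZ x y = K x y - KxZ x * G⁻¹ * KZy y) :
    ∀ (m : ℕ) (xs : Fin m → EuclideanSpace ℝ (Fin n)),
      (Matrix.of fun q r : Fin m × Fin n =>
        KZ (xs q.1) (xs r.1) q.2 r.2).PosSemidef := by
  classical
  -- symmetry of K
  have hsym : ∀ x y (a b : Fin n), K x y a b = K y x b a := by
    intro x y a b
    have h := (hKpos 2 ![x, y]).isHermitian
    have := congrFun (congrFun h ((1 : Fin 2), b)) ((0 : Fin 2), a)
    simpa [Matrix.conjTranspose_apply] using this
  -- G is positive definite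
  have hGpsd : G.PosSemidef := hG ▸ hKpos p z
  haveI : Invertible G := G.invertibleOfIsUnitDet hGinv
  have hGpd : G.PosDef := by
    exact hGpsd.posDef_iff_det_ne_zero.mpr hGinv.ne_zero
  intro m xs
  set e : ((Fin m × Fin n) ⊕ (Fin p × Fin n)) ≃ (Fin (m + p) × Fin n) :=
    (Equiv.sumProdDistrib (Fin m) (Fin p) (Fin n)).symm.trans
      (Equiv.prodCongr finSumFinEquiv (Equiv.refl (Fin n))) with he
  set xs' : Fin (m + p) → EuclideanSpace ℝ (Fin n) :=
    fun i => Sum.elim xs z (finSumFinEquiv.symm i) with hxs'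
  have hbig := hKpos (m + p) xs'
  set A : Matrix (Fin m × Fin n) (Fin m × Fin n) ℝ :=
    Matrix.of fun q r => K (xs q.1) (xs r.1) q.2 r.2 with hA
  set B : Matrix (Fin m × Fin n) (Fin p × Fin n) ℝ :=
    Matrix.of fun q r => K (xs q.1) (z r.1) q.2 r.2 with hB
  have hfb : (Matrix.fromBlocks A B Bᴴ G).PosSemidef := by
    have hsub : ((Matrix.of fun q r : Fin (m + p) × Fin n =>
        K (xs' q.1) (xs' r.1) q.2 r.2).submatrix e e) = Matrix.fromBlocks A B Bᴴ G := by
      ext i j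
      rcases i with i | i <;> rcases j with j | j <;>
        simp [he, hA, hB, hG, hxs', Matrix.fromBlocks, Matrix.conjTranspose_apply,
          Equiv.sumProdDistrib]
      exact hsym _ _ _ _
    rw [← hsub]
    exact (Matrix.posSemidef_submatrix_equiv e).mpr hbig
  have hschur := (Matrix.PosDef.fromBlocks₂₂ A B hGpd).mp hfb
  have hfinal : (Matrix.of fun q r : Fin m × Fin n =>
      KZ (xs q.1) (xs r.1) q.2 r.2) = A - B * G⁻¹ * Bᴴ := by
    ext q r
    simp only [Matrix.of_apply, hKZ, Matrix.sub_apply, hA, Matrix.mul_apply,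
      Matrix.conjTranspose_apply, hB, hKxZ, hKZy, RCLike.star_def, starRingEnd_apply, star_trivial]
    congr 1
    refine Finset.sum_congr rfl fun t _ => ?_
    rw [hsym (z t.1) (xs r.1)]
  rw [hfinal]
  exact hschur
end

section
/- Let n, p, D be positive natural numbers, let Φ : ℝⁿ → Matrix (Fin D) (Fin n) ℝ be a matrix-valued feature map, and let z₁, …, z_p ∈ ℝⁿ. Let Φ(Z) ∈ Matrix (Fin D) (Fin p × Fin n) ℝ be the horizontal concatenation of Φ(z₁), …, Φ(z_p), assume Φ(Z)ᵀΦ(Z) is invertible, and set P = Φ(Z)(Φ(Z)ᵀΦ(Z))⁻¹Φ(Z)ᵀ. Let L ∈ Matrix (Fin D) (Fin D) ℝ satisfy L Lᵀ = I − P, and define the projected feature map Φ^Z(x) = Lᵀ Φ(x). Then Φ^Z vanishes on Z: for every j ∈ Fin p, Φ^Z(zⱼ) = 0 (the zero D × n matrix). -/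
theorem projected_feature_map_vanishes_on_point_set
    (n p D : ℕ) (hn : 0 < n) (hp : 0 < p) (hD : 0 < D)
    (Φ : EuclideanSpace ℝ (Fin n) → Matrix (Fin D) (Fin n) ℝ)
    (z : Fin p → EuclideanSpace ℝ (Fin n))
    (ΦZ : Matrix (Fin D) (Fin p × Fin n) ℝ)
    (hΦZ : ΦZ = Matrix.of fun (d : Fin D) (r : Fin p × Fin n) => Φ (z r.1) d r.2)
    (hinv : IsUnit (ΦZ.transpose * ΦZ).det)
    (P : Matrix (Fin D) (Fin D) ℝ)
    (hP : P = ΦZ * (ΦZ.transpose * ΦZ)⁻¹ * ΦZ.transpose)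
    (L : Matrix (Fin D) (Fin D) ℝ)
    (hL : L * L.transpose = 1 - P)
    (ΦprojZ : EuclideanSpace ℝ (Fin n) → Matrix (Fin D) (Fin n) ℝ)
    (hΦproj : ∀ x, ΦprojZ x = L.transpose * Φ x) :
    ∀ j : Fin p, ΦprojZ (z j) = 0 := by
  intro j
  have key : (1 - P) * ΦZ = 0 := by
    have h1 : P * ΦZ = ΦZ := by
      rw [hP, Matrix.mul_assoc, Matrix.mul_assoc, Matrix.nonsing_inv_mul _ hinv,
        Matrix.mul_one]
    rw [Matrix.sub_mul, Matrix.one_mul, h1, sub_self]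
  have hcol : (1 - P) * Φ (z j) = 0 := by
    ext d i
    have := congrFun (congrFun key d) (j, i)
    simpa [Matrix.mul_apply, hΦZ] using this
  have hmul : L * (L.transpose * Φ (z j)) = 0 := by
    rw [← Matrix.mul_assoc, hL, hcol]
  have hzero : (L.transpose * Φ (z j)).transpose * (L.transpose * Φ (z j)) = 0 := by
    rw [Matrix.transpose_mul, Matrix.transpose_transpose, Matrix.mul_assoc, hmul,
      Matrix.mul_zero]
  have : L.transpose * Φ (z j) = 0 := by
    have h := hzero
    rw [show (L.transpose * Φ (z j)).transpose
        = (L.transpose * Φ (z j)).conjTranspose by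
      ext a b; simp [Matrix.conjTranspose_apply]] at h
    exact Matrix.conjTranspose_mul_self_eq_zero.mp h
  rw [hΦproj, this]
end

section
/- Let n be a positive natural number, σ > 0, and let μ be the probability measure on ℝⁿ given by the product of n copies of the real Gaussian measure with mean 0 and variance 1/σ². Then for all x, y ∈ ℝⁿ, the random Fourier feature estimator is unbiased for the Gaussian kernel: ∫_{ℝⁿ} ( (1/(2π)) ∫₀^{2π} 2 cos(⟨w, x⟩ + b) cos(⟨w, y⟩ + b) db ) dμ(w) = exp(−‖x − y‖²/(2σ²)). -/
open MeasureTheory ProbabilityTheory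
open scoped NNReal ENNReal

/-- The inner phase integral of the random Fourier feature estimator. -/
lemma rff_inner (a c : ℝ) :
    ∫ b in (0 : ℝ)..(2 * Real.pi), 2 * Real.cos (a + b) * Real.cos (c + b)
      = 2 * Real.pi * Real.cos (a - c) := by
  have hpt : ∀ b : ℝ, 2 * Real.cos (a + b) * Real.cos (c + b)
      = Real.cos (a - c) + Real.cos (2 * b + (a + c)) := by
    intro b
    have h1 : a - c = (a + b) - (c + b) := by ring
    have h2 : 2 * b + (a + c) = (a + b) + (c + b) := by ring
    rw [h1, h2]
    generalize a + b = p
    generalize c + b = q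
    rw [Real.cos_sub, Real.cos_add]
    ring
  simp_rw [hpt]
  rw [intervalIntegral.integral_add (by apply Continuous.intervalIntegrable; continuity)
      (by apply Continuous.intervalIntegrable; continuity)]
  rw [intervalIntegral.integral_const]
  rw [intervalIntegral.integral_comp_mul_add (a := (0:ℝ)) (b := 2*Real.pi) Real.cos
      (two_ne_zero) (a + c)]
  rw [integral_cos]
  have : Real.sin (2 * (2 * Real.pi) + (a + c)) = Real.sin (2 * 0 + (a + c)) := by
    rw [show 2 * (2 * Real.pi) + (a + c) = ((a + c) + 2 * Real.pi) + 2 * Real.pi by ring,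
      Real.sin_add_two_pi, Real.sin_add_two_pi]
    ring_nf
  rw [this]
  simp

/-- The characteristic function of a centered real Gaussian measure. -/
lemma rff_charFun (v : ℝ≥0) (hv : v ≠ 0) (z : ℝ) :
    ∫ x : ℝ, Complex.exp (Complex.I * z * x) ∂(gaussianReal 0 v) =
      Complex.exp (-(v : ℝ) * z ^ 2 / 2) := by
  have hv' : (0:ℝ) < v := by
    exact_mod_cast hv.bot_lt
  have hvC : ((v : ℝ) : ℂ) ≠ 0 := by
    exact Complex.ofReal_ne_zero.mpr (ne_of_gt hv')
  rw [gaussianReal_of_var_ne_zero _ hv,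
    show gaussianPDF 0 v = fun x => ((Real.toNNReal (gaussianPDFReal 0 v x) : ℝ≥0∞)) from rfl,
    integral_withDensity_eq_integral_smul ((measurable_gaussianPDFReal 0 v).real_toNNReal) _]
  have key : ∀ x : ℝ, (Real.toNNReal (gaussianPDFReal 0 v x)) • Complex.exp (Complex.I * z * x)
      = ((Real.sqrt (2 * Real.pi * v))⁻¹ : ℝ) *
        (Complex.exp (Complex.I * (z:ℂ) * x) *
          Complex.exp (-(((1/(2*(v:ℝ)) : ℝ)):ℂ) * (x:ℂ) ^ 2)) := by
    intro x
    rw [NNReal.smul_def, Real.coe_toNNReal _ (gaussianPDFReal_nonneg 0 v x),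
      Complex.real_smul, gaussianPDFReal]
    push_cast
    rw [mul_assoc, ← Complex.exp_add, ← Complex.exp_add]
    congr 1
    field_simp
    ring
  simp_rw [key]
  rw [MeasureTheory.integral_const_mul]
  have hb : (0:ℝ) < ((((1/(2*(v:ℝ)) : ℝ)):ℂ)).re := by
    simp only [Complex.ofReal_re]
    positivity
  rw [fourierIntegral_gaussian hb (z : ℂ)]
  have h1 : ((Real.pi : ℂ) / (((1/(2*(v:ℝ)) : ℝ)):ℂ)) = ((2 * Real.pi * v : ℝ) : ℂ) := by
    push_cast
    field_simp
  have h2 : (((2 * Real.pi * v : ℝ) : ℂ)) ^ (1/2 : ℂ) = ((Real.sqrt (2 * Real.pi * v) : ℝ) : ℂ) := by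
    rw [Real.sqrt_eq_rpow, Complex.ofReal_cpow (by positivity)]
    norm_num
  have h3 : (-(z:ℂ) ^ 2 / (4 * (((1/(2*(v:ℝ)) : ℝ)):ℂ))) = ((-(v : ℝ) * z ^ 2 / 2 : ℝ) : ℂ) := by
    push_cast
    field_simp
    ring
  rw [h1, h2, h3, ← mul_assoc, ← Complex.ofReal_mul]
  rw [inv_mul_cancel₀ (by positivity), Complex.ofReal_one, one_mul]
  norm_cast

/-- Integral of the cosine of a linear functional against an i.i.d. Gaussian product measure. -/
lemma rff_pi_integral {n : ℕ} (v : ℝ≥0) (hv : v ≠ 0) (z : Fin n → ℝ) :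
    ∫ w, Real.cos (∑ i, w i * z i) ∂(Measure.pi fun _ : Fin n => gaussianReal 0 v)
      = Real.exp (-(v : ℝ) * (∑ i, z i ^ 2) / 2) := by
  have hone := rff_charFun v hv
  set μ : Measure (Fin n → ℝ) := Measure.pi fun _ : Fin n => gaussianReal 0 v with hμ
  have : IsProbabilityMeasure μ := by rw [hμ]; infer_instance
  have hmeas : AEStronglyMeasurable
      (fun w : Fin n → ℝ => Complex.exp (Complex.I * (∑ i, w i * z i : ℝ))) μ := by
    apply Continuous.aestronglyMeasurable
    continuity
  have hint : Integrable (fun w : Fin n → ℝ =>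
      Complex.exp (Complex.I * (∑ i, w i * z i : ℝ))) μ := by
    apply Integrable.mono' (integrable_const 1) hmeas
    filter_upwards with w
    rw [show Complex.I * ((∑ i, w i * z i : ℝ) : ℂ) = ((∑ i, w i * z i : ℝ) : ℂ) * Complex.I by
      ring]
    rw [Complex.norm_exp_ofReal_mul_I]
  have h1 : ∫ w, Real.cos (∑ i, w i * z i) ∂μ
      = (∫ w, Complex.exp (Complex.I * (∑ i, w i * z i : ℝ)) ∂μ).re := by
    rw [← RCLike.re_eq_complex_re, ← integral_re hint, RCLike.re_eq_complex_re]
    congr 1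
    funext w
    rw [show Complex.I * ((∑ i, w i * z i : ℝ) : ℂ) = ((∑ i, w i * z i : ℝ) : ℂ) * Complex.I by
      ring]
    rw [Complex.exp_ofReal_mul_I_re]
  rw [h1]
  have h2 : ∀ w : Fin n → ℝ, Complex.exp (Complex.I * (∑ i, w i * z i : ℝ))
      = ∏ i, Complex.exp (Complex.I * (z i : ℂ) * (w i : ℂ)) := by
    intro w
    rw [← Complex.exp_sum]
    congr 1
    push_cast
    rw [Finset.mul_sum]
    congr 1
    funext i
    ring
  simp_rw [h2]
  have h3 : ∫ w, ∏ i, Complex.exp (Complex.I * (z i : ℂ) * (w i : ℂ)) ∂μ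
      = ∏ i, ∫ x : ℝ, Complex.exp (Complex.I * (z i : ℂ) * (x : ℂ)) ∂(gaussianReal 0 v) :=
    MeasureTheory.integral_fintype_prod_eq_prod (E := fun _ => ℝ)
      (fun i (x : ℝ) => Complex.exp (Complex.I * (z i : ℂ) * (x : ℂ)))
      (μ := fun _ => gaussianReal 0 v)
  rw [h3]
  have h4 : ∀ i, ∫ x : ℝ, Complex.exp (Complex.I * (z i : ℂ) * (x : ℂ)) ∂(gaussianReal 0 v)
      = Complex.exp (-(v : ℝ) * (z i) ^ 2 / 2) := fun i => hone (z i)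
  simp_rw [h4, ← Complex.exp_sum]
  have h5 : ∑ i, (-((v:ℝ):ℂ) * ((z i : ℝ):ℂ) ^ 2 / 2) = ((-(v:ℝ) * (∑ i, z i ^ 2) / 2 : ℝ) : ℂ) := by
    push_cast
    rw [Finset.mul_sum, Finset.sum_div]
  rw [h5, Complex.exp_ofReal_re]

theorem random_fourier_features_unbiased_for_gaussian_kernel
    (n : ℕ) (hn : 0 < n) (σ : ℝ) (hσ : 0 < σ)
    (μ : Measure (Fin n → ℝ))
    (hμ : μ = Measure.pi fun _ : Fin n => gaussianReal 0 ((σ ^ 2)⁻¹.toNNReal))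
    (x y : Fin n → ℝ) :
    ∫ w, ((1 / (2 * Real.pi)) *
        ∫ b in (0 : ℝ)..(2 * Real.pi),
          2 * Real.cos ((∑ i, w i * x i) + b) * Real.cos ((∑ i, w i * y i) + b)) ∂μ =
      Real.exp (-(∑ i, (x i - y i) ^ 2) / (2 * σ ^ 2)) := by
  have hπ : Real.pi ≠ 0 := Real.pi_ne_zero
  have hinner : ∀ w : Fin n → ℝ,
      (1 / (2 * Real.pi)) *
        ∫ b in (0 : ℝ)..(2 * Real.pi),
          2 * Real.cos ((∑ i, w i * x i) + b) * Real.cos ((∑ i, w i * y i) + b)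
      = Real.cos (∑ i, w i * (x i - y i)) := by
    intro w
    rw [rff_inner]
    rw [show (∑ i, w i * x i) - (∑ i, w i * y i) = ∑ i, w i * (x i - y i) by
      rw [← Finset.sum_sub_distrib]; congr 1; funext i; ring]
    field_simp
  simp_rw [hinner, hμ]
  have hv : ((σ ^ 2)⁻¹).toNNReal ≠ 0 := by
    rw [ne_eq, Real.toNNReal_eq_zero, not_le]
    positivity
  have hvr : ((((σ ^ 2)⁻¹).toNNReal : ℝ≥0) : ℝ) = (σ ^ 2)⁻¹ :=
    Real.coe_toNNReal _ (by positivity)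
  rw [rff_pi_integral _ hv (fun i => x i - y i)]
  rw [hvr]
  congr 1
  field_simp
end

section
/- Let n be a positive natural number, σ > 0, and let μ be the probability measure on ℝⁿ given by the product of n copies of the real Gaussian measure with mean 0 and variance 1/σ². Then for every δ ∈ ℝⁿ and all indices i, j ∈ Fin n, ∫ wᵢ wⱼ cos(⟨w, δ⟩) dμ(w) = exp(−‖δ‖²/(2σ²)) · ( δ_{ij}/σ² − δᵢ δⱼ/σ⁴ ), where δ_{ij} is 1 if i = j and 0 otherwise. -/
open MeasureTheory Real Complex
open scoped NNReal ENNReal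

noncomputable section
namespace GaussAux

lemma cont_aux (b : ℝ) (m : ℕ) (s : ℝ) :
    Continuous fun x : ℝ => (x:ℂ)^m * Complex.exp (I * s * x - b * x ^ 2) := by
  fun_prop

lemma norm_aux (b : ℝ) (m : ℕ) (s : ℝ) (x : ℝ) :
    ‖(x:ℂ)^m * Complex.exp (I * s * x - b * x ^ 2)‖ = |x|^m * Real.exp (-b * x^2) := by
  rw [norm_mul, norm_pow, Complex.norm_exp,
    Complex.norm_real, Real.norm_eq_abs]
  congr 2
  have : ((x:ℂ)^2).re = x^2 := by
    rw [← Complex.ofReal_pow, Complex.ofReal_re]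
  simp [Complex.sub_re, Complex.mul_re, Complex.mul_im, this]

lemma integrable_pow_exp {b : ℝ} (hb : 0 < b) (m : ℕ) :
    Integrable fun x : ℝ => |x| ^ m * Real.exp (-b * x ^ 2) := by
  have hm : (-1 : ℝ) < (m : ℝ) := by
    have : (0:ℝ) ≤ m := Nat.cast_nonneg m
    linarith
  have h := (integrable_rpow_mul_exp_neg_mul_sq hb hm).abs
  refine h.congr (Filter.Eventually.of_forall fun x => ?_)
  simp only
  rw [abs_mul, Real.rpow_natCast, _root_.abs_pow, _root_.abs_of_nonneg (Real.exp_pos _).le]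

lemma integrable_aux {b : ℝ} (hb : 0 < b) (m : ℕ) (s : ℝ) :
    Integrable fun x : ℝ => (x:ℂ)^m * Complex.exp (I * s * x - b * x ^ 2) := by
  refine (integrable_pow_exp hb m).mono' (cont_aux b m s).aestronglyMeasurable
    (Filter.Eventually.of_forall fun x => ?_)
  rw [norm_aux]


lemma key0 {b : ℝ} (hb : 0 < b) (t : ℝ) :
    ∫ x : ℝ, Complex.exp (I * t * x - b * x ^ 2)
      = ((π : ℂ) / b) ^ (1/2 : ℂ) * Complex.exp (-(t:ℂ) ^ 2 / (4 * b)) := by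
  have h := fourierIntegral_gaussian (b := (b:ℂ)) (by simpa using hb) (t : ℂ)
  simp_rw [← Complex.exp_add] at h
  rw [← h]
  congr 1 with x
  congr 1
  ring

lemma hasDerivAt_aux (b : ℝ) (m : ℕ) (x : ℝ) (t : ℝ) :
    HasDerivAt (fun s : ℝ => (x:ℂ) ^ m * Complex.exp (I * s * x - b * x ^ 2))
      (I * x * ((x:ℂ) ^ m * Complex.exp (I * t * x - b * x ^ 2))) t := by
  have h0 : HasDerivAt (fun s : ℝ => (s:ℂ)) 1 t := by
    simpa using (hasDerivAt_id t).ofReal_comp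
  have h1 : HasDerivAt (fun s : ℝ => I * (s:ℂ) * x - b * x ^ 2) (I * x) t := by
    have := ((h0.const_mul I).mul_const (x:ℂ)).sub_const ((b:ℂ) * x ^ 2)
    simpa using this
  have h2 := h1.cexp
  have h3 := h2.const_mul ((x:ℂ) ^ m)
  exact h3.congr_deriv (by ring)

lemma hasDerivAt_int {b : ℝ} (hb : 0 < b) (m : ℕ) (t : ℝ) :
    HasDerivAt (fun s : ℝ => ∫ x : ℝ, (x:ℂ)^m * Complex.exp (I * s * x - b * x ^ 2))
      (∫ x : ℝ, I * x * ((x:ℂ)^m * Complex.exp (I * t * x - b * x ^ 2))) t := by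
  have := hasDerivAt_integral_of_dominated_loc_of_deriv_le (x₀ := t)
    (F := fun (s : ℝ) (x : ℝ) => (x:ℂ)^m * Complex.exp (I * s * x - b * x ^ 2))
    (F' := fun (s : ℝ) (x : ℝ) => I * x * ((x:ℂ)^m * Complex.exp (I * s * x - b * x ^ 2)))
    (bound := fun x : ℝ => |x| ^ (m+1) * Real.exp (-b * x ^ 2))
    Filter.univ_mem
    (Filter.Eventually.of_forall fun s => (cont_aux b m s).aestronglyMeasurable)
    (integrable_aux hb m t)
    (by
      have : Continuous fun x : ℝ => I * x * ((x:ℂ)^m * Complex.exp (I * t * x - b * x ^ 2)) := by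
        fun_prop
      exact this.aestronglyMeasurable)
    (Filter.Eventually.of_forall fun x s _ => by
      rw [norm_mul, norm_mul, norm_aux, Complex.norm_I, one_mul,
        Complex.norm_real, Real.norm_eq_abs, pow_succ]
      ring_nf
      exact le_refl _)
    (integrable_pow_exp hb (m+1))
    (Filter.Eventually.of_forall fun x s _ => hasDerivAt_aux b m x s)
  exact this.2


lemma key1 {b : ℝ} (hb : 0 < b) (t : ℝ) :
    ∫ x : ℝ, (x:ℂ) * Complex.exp (I * t * x - b * x ^ 2)
      = ((π : ℂ) / b) ^ (1/2 : ℂ) * (I * t / (2*b)) * Complex.exp (-(t:ℂ) ^ 2 / (4 * b)) := by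
  have hb' : (b:ℂ) ≠ 0 := by exact_mod_cast hb.ne'
  have hL := hasDerivAt_int hb 0 t
  simp only [pow_zero, one_mul] at hL
  have h0 : HasDerivAt (fun s : ℝ => (s:ℂ)) 1 t := by
    simpa using (hasDerivAt_id t).ofReal_comp
  have hR : HasDerivAt (fun s : ℝ => ∫ x : ℝ, Complex.exp (I * s * x - b * x ^ 2))
      (((π : ℂ) / b) ^ (1/2 : ℂ) * (-(t:ℂ)/(2*b)) * Complex.exp (-(t:ℂ) ^ 2 / (4 * b))) t := by
    have hfun : (fun s : ℝ => ∫ x : ℝ, Complex.exp (I * s * x - b * x ^ 2))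
        = fun s : ℝ => ((π : ℂ) / b) ^ (1/2 : ℂ) * Complex.exp (-(s:ℂ) ^ 2 / (4 * b)) :=
      funext fun s => key0 hb s
    rw [hfun]
    have hsq : HasDerivAt (fun s : ℝ => (s:ℂ) ^ 2) (2*(t:ℂ)) t := by
      have h := h0.mul h0
      have heq2 : (fun s : ℝ => (s:ℂ)^2) = fun s : ℝ => (s:ℂ) * (s:ℂ) := by
        funext s; rw [sq]
      rw [heq2]
      exact h.congr_deriv (by ring)
    have h1 : HasDerivAt (fun s : ℝ => -(s:ℂ) ^ 2 / (4 * b)) (-(2*(t:ℂ))/(4*(b:ℂ))) t :=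
      (hsq.neg).div_const ((4:ℂ)*(b:ℂ))
    have := (h1.cexp).const_mul (((π : ℂ) / b) ^ (1/2 : ℂ))
    exact this.congr_deriv (by ring)
  have heq := hL.unique hR
  have hx : ∀ x : ℝ, (x:ℂ) * Complex.exp (I * t * x - b * x ^ 2)
      = (-I) * (I * x * Complex.exp (I * t * x - b * x ^ 2)) := by
    intro x
    linear_combination ((x:ℂ) * Complex.exp (I * t * x - b * x ^ 2)) * Complex.I_mul_I
  simp_rw [hx]
  rw [MeasureTheory.integral_const_mul, heq]
  ring

lemma key2 {b : ℝ} (hb : 0 < b) (t : ℝ) :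
    ∫ x : ℝ, (x:ℂ)^2 * Complex.exp (I * t * x - b * x ^ 2)
      = ((π : ℂ) / b) ^ (1/2 : ℂ) * (1/(2*b) - (t:ℂ)^2/(4*b^2)) * Complex.exp (-(t:ℂ) ^ 2 / (4 * b)) := by
  have hb' : (b:ℂ) ≠ 0 := by exact_mod_cast hb.ne'
  have hL := hasDerivAt_int hb 1 t
  simp only [pow_one] at hL
  have h0 : HasDerivAt (fun s : ℝ => (s:ℂ)) 1 t := by
    simpa using (hasDerivAt_id t).ofReal_comp
  set C : ℂ := ((π : ℂ) / b) ^ (1/2 : ℂ) with hC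
  have hR : HasDerivAt (fun s : ℝ => ∫ x : ℝ, (x:ℂ) * Complex.exp (I * s * x - b * x ^ 2))
      (C * (I/(2*b)) * Complex.exp (-(t:ℂ) ^ 2 / (4 * b))
        + C * (I * t / (2*b)) * (Complex.exp (-(t:ℂ) ^ 2 / (4 * b)) * (-(t:ℂ)/(2*b)))) t := by
    have hfun : (fun s : ℝ => ∫ x : ℝ, (x:ℂ) * Complex.exp (I * s * x - b * x ^ 2))
        = fun s : ℝ => (C * (I * s / (2*b))) * Complex.exp (-(s:ℂ) ^ 2 / (4 * b)) :=
      funext fun s => by rw [key1 hb s, mul_assoc, ← mul_assoc]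
    rw [hfun]
    have hf : HasDerivAt (fun s : ℝ => C * (I * (s:ℂ) / (2*b))) (C * (I/(2*b))) t := by
      have := ((h0.const_mul I).div_const ((2:ℂ)*b)).const_mul C
      exact this.congr_deriv (by ring)
    have hg : HasDerivAt (fun s : ℝ => Complex.exp (-(s:ℂ) ^ 2 / (4 * b)))
        (Complex.exp (-(t:ℂ) ^ 2 / (4 * b)) * (-(t:ℂ)/(2*b))) t := by
      have hsq : HasDerivAt (fun s : ℝ => (s:ℂ) ^ 2) (2*(t:ℂ)) t := by
        have h := h0.mul h0
        have heq2 : (fun s : ℝ => (s:ℂ)^2) = fun s : ℝ => (s:ℂ) * (s:ℂ) := by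
          funext s; rw [sq]
        rw [heq2]
        exact h.congr_deriv (by ring)
      have h1 : HasDerivAt (fun s : ℝ => -(s:ℂ) ^ 2 / (4 * b)) (-(2*(t:ℂ))/(4*(b:ℂ))) t :=
        (hsq.neg).div_const ((4:ℂ)*(b:ℂ))
      have := h1.cexp
      convert this using 1
      ring
    exact hf.mul hg
  have heq := hL.unique hR
  have hx : ∀ x : ℝ, (x:ℂ)^2 * Complex.exp (I * t * x - b * x ^ 2)
      = (-I) * (I * x * ((x:ℂ) * Complex.exp (I * t * x - b * x ^ 2))) := by
    intro x
    linear_combination ((x:ℂ)^2 * Complex.exp (I * t * x - b * x ^ 2)) * Complex.I_mul_I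
  simp_rw [hx]
  rw [MeasureTheory.integral_const_mul, heq]
  linear_combination (C * Complex.exp (-(t:ℂ)^2/(4*(b:ℂ))) *
    ((t:ℂ)^2/(4*(b:ℂ)^2) - 1/(2*(b:ℂ)))) * Complex.I_mul_I


open ProbabilityTheory in
lemma gauss_eq (ν : NNReal) (hν : ν ≠ 0) (f : ℝ → ℂ) :
    ∫ x, f x ∂(gaussianReal 0 ν) = ∫ x : ℝ, gaussianPDFReal 0 ν x • f x := by
  rw [gaussianReal_of_var_ne_zero 0 hν]
  have h : (gaussianPDF 0 ν) = fun x => (((gaussianPDFReal 0 ν x).toNNReal : ℝ≥0) : ℝ≥0∞) := rfl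
  rw [h, integral_withDensity_eq_integral_smul
    ((measurable_gaussianPDFReal 0 ν).real_toNNReal)]
  congr 1 with x
  rw [NNReal.smul_def, Real.coe_toNNReal _ (gaussianPDFReal_nonneg 0 ν x)]

open ProbabilityTheory in
lemma gauss_moment (ν : NNReal) (hν : 0 < (ν:ℝ)) (m : ℕ) (t : ℝ) :
    ∫ x, (x:ℂ)^m * Complex.exp (I * t * x) ∂(gaussianReal 0 ν)
      = ((√(2 * π * ν))⁻¹ : ℝ) •
        ∫ x : ℝ, (x:ℂ)^m * Complex.exp (I * t * x - ((2*(ν:ℝ))⁻¹ : ℝ) * (x:ℂ) ^ 2) := by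
  have hν' : ν ≠ 0 := by exact_mod_cast hν.ne'
  rw [gauss_eq ν hν', ← MeasureTheory.integral_smul]
  congr 1 with x
  rw [gaussianPDFReal, mul_smul]
  congr 1
  rw [Complex.real_smul, Complex.ofReal_exp, mul_comm, mul_assoc, ← Complex.exp_add]
  congr 2
  push_cast
  have : (ν:ℂ) ≠ 0 := by exact_mod_cast hν.ne'
  field_simp
  ring

lemma const_fact (ν : NNReal) (hν : 0 < (ν:ℝ)) :
    ((π:ℂ) / (((2*(ν:ℝ))⁻¹ : ℝ) : ℂ)) ^ (1/2 : ℂ) = ((√(2 * π * ν) : ℝ) : ℂ) := by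
  have h1 : ((π:ℂ) / (((2*(ν:ℝ))⁻¹ : ℝ) : ℂ)) = ((2 * π * (ν:ℝ) : ℝ) : ℂ) := by
    push_cast
    rw [div_eq_mul_inv, inv_inv]
    ring
  have h2 : ((1/2 : ℂ)) = (((1/2:ℝ) : ℝ) : ℂ) := by norm_num
  rw [h1, h2, ← Complex.ofReal_cpow (by positivity), ← Real.sqrt_eq_rpow]


lemma exp_fact (ν : NNReal) (hν : 0 < (ν:ℝ)) (t : ℝ) :
    -(t:ℂ)^2/(4*((((2*(ν:ℝ))⁻¹:ℝ)):ℂ)) = ((-(ν:ℝ) * t^2 / 2 : ℝ) : ℂ) := by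
  have hν' : (ν:ℂ) ≠ 0 := by exact_mod_cast hν.ne'
  push_cast
  field_simp
  ring

open ProbabilityTheory in
lemma gauss0 (ν : NNReal) (hν : 0 < (ν:ℝ)) (t : ℝ) :
    ∫ x, Complex.exp (I * t * x) ∂(gaussianReal 0 ν)
      = ((Real.exp (-(ν:ℝ) * t^2 / 2) : ℝ) : ℂ) := by
  have hb : 0 < (2*(ν:ℝ))⁻¹ := by positivity
  have hc : (√(2 * π * (ν:ℝ))) ≠ 0 := by positivity
  have h := gauss_moment ν hν 0 t
  simp only [pow_zero, one_mul] at h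
  rw [h, key0 hb t, const_fact ν hν, exp_fact ν hν t, Complex.real_smul,
    ← Complex.ofReal_exp, ← Complex.ofReal_mul, ← Complex.ofReal_mul]
  congr 1
  field_simp

open ProbabilityTheory in
lemma gauss1 (ν : NNReal) (hν : 0 < (ν:ℝ)) (t : ℝ) :
    ∫ x, (x:ℂ) * Complex.exp (I * t * x) ∂(gaussianReal 0 ν)
      = (I * t * (ν:ℝ)) * ((Real.exp (-(ν:ℝ) * t^2 / 2) : ℝ) : ℂ) := by
  have hb : 0 < (2*(ν:ℝ))⁻¹ := by positivity
  have hc : (√(2 * π * (ν:ℝ))) ≠ 0 := by positivity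
  have hν' : (ν:ℂ) ≠ 0 := by exact_mod_cast hν.ne'
  have h := gauss_moment ν hν 1 t
  simp only [pow_one] at h
  rw [h, key1 hb t, const_fact ν hν, exp_fact ν hν t, Complex.real_smul,
    ← Complex.ofReal_exp, Complex.ofReal_inv]
  have hcc : ((√(2 * π * (ν:ℝ)) : ℝ) : ℂ) ≠ 0 := by exact_mod_cast hc
  have hbc : ((((2*(ν:ℝ))⁻¹ : ℝ)) : ℂ) = (2*(ν:ℂ))⁻¹ := by push_cast; ring
  have h2 : ((√2 : ℝ) : ℂ) ≠ 0 := by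
    simp only [ne_eq, Complex.ofReal_eq_zero]
    positivity
  have h3 : ((√π : ℝ) : ℂ) ≠ 0 := by
    simp only [ne_eq, Complex.ofReal_eq_zero]
    positivity
  have h4 : ((√(ν:ℝ) : ℝ) : ℂ) ≠ 0 := by
    simp only [ne_eq, Complex.ofReal_eq_zero]
    positivity
  rw [hbc]
  field_simp

open ProbabilityTheory in
lemma gauss2 (ν : NNReal) (hν : 0 < (ν:ℝ)) (t : ℝ) :
    ∫ x, (x:ℂ)^2 * Complex.exp (I * t * x) ∂(gaussianReal 0 ν)
      = (((ν:ℝ):ℂ) - ((ν:ℝ):ℂ)^2 * t^2) * ((Real.exp (-(ν:ℝ) * t^2 / 2) : ℝ) : ℂ) := by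
  have hb : 0 < (2*(ν:ℝ))⁻¹ := by positivity
  have hc : (√(2 * π * (ν:ℝ))) ≠ 0 := by positivity
  have hν' : (ν:ℂ) ≠ 0 := by exact_mod_cast hν.ne'
  have h := gauss_moment ν hν 2 t
  rw [h, key2 hb t, const_fact ν hν, exp_fact ν hν t, Complex.real_smul,
    ← Complex.ofReal_exp, Complex.ofReal_inv]
  have hcc : ((√(2 * π * (ν:ℝ)) : ℝ) : ℂ) ≠ 0 := by exact_mod_cast hc
  have hbc : ((((2*(ν:ℝ))⁻¹ : ℝ)) : ℂ) = (2*(ν:ℂ))⁻¹ := by push_cast; ring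
  have h2 : ((√2 : ℝ) : ℂ) ≠ 0 := by
    simp only [ne_eq, Complex.ofReal_eq_zero]
    positivity
  have h3 : ((√π : ℝ) : ℂ) ≠ 0 := by
    simp only [ne_eq, Complex.ofReal_eq_zero]
    positivity
  have h4 : ((√(ν:ℝ) : ℝ) : ℂ) ≠ 0 := by
    simp only [ne_eq, Complex.ofReal_eq_zero]
    positivity
  rw [hbc]
  field_simp
  ring

open ProbabilityTheory in
lemma gauss_integrable (ν : NNReal) (hν : 0 < (ν:ℝ)) (m : ℕ) (t : ℝ) :
    Integrable (fun x : ℝ => (x:ℂ)^m * Complex.exp (I * t * x)) (gaussianReal 0 ν) := by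
  have hν' : ν ≠ 0 := by exact_mod_cast hν.ne'
  have hb : 0 < (2*(ν:ℝ))⁻¹ := by positivity
  rw [gaussianReal_of_var_ne_zero 0 hν']
  have h : (gaussianPDF 0 ν) = fun x => (((gaussianPDFReal 0 ν x).toNNReal : ℝ≥0) : ℝ≥0∞) :=
    rfl
  rw [h, integrable_withDensity_iff_integrable_smul
    ((measurable_gaussianPDFReal 0 ν).real_toNNReal)]
  refine ((integrable_aux hb m t).smul (((√(2 * π * ν))⁻¹ : ℝ))).congr
    (Filter.Eventually.of_forall fun x => ?_)
  simp only [Pi.smul_apply]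
  symm
  rw [NNReal.smul_def, Real.coe_toNNReal _ (gaussianPDFReal_nonneg 0 ν x),
    gaussianPDFReal, mul_smul]
  congr 1
  rw [Complex.real_smul, Complex.ofReal_exp, mul_comm, mul_assoc, ← Complex.exp_add]
  congr 2
  push_cast
  have hν'' : (ν:ℂ) ≠ 0 := by exact_mod_cast hν.ne'
  field_simp
  ring

end GaussAux

open GaussAux ProbabilityTheory in
theorem gaussian_second_moment_cosine_identity
    (n : ℕ) (hn : 0 < n) (σ : ℝ) (hσ : 0 < σ)
    (μ : Measure (Fin n → ℝ))
    (hμ : μ = Measure.pi fun _ : Fin n => gaussianReal 0 ((σ ^ 2)⁻¹.toNNReal))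
    (δ : Fin n → ℝ) (i j : Fin n) :
    ∫ w, w i * w j * Real.cos (∑ k, w k * δ k) ∂μ =
      Real.exp (-(∑ k, δ k ^ 2) / (2 * σ ^ 2)) *
        ((if i = j then (1 : ℝ) else 0) / σ ^ 2 - δ i * δ j / σ ^ 4) := by
  have hσ2 : (0:ℝ) < (σ^2)⁻¹ := by positivity
  set ν : NNReal := (σ^2)⁻¹.toNNReal with hνdef
  have hνr : (ν:ℝ) = (σ^2)⁻¹ := Real.coe_toNNReal _ hσ2.le
  have hνpos : 0 < (ν:ℝ) := by rw [hνr]; exact hσ2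
  letI : MeasureSpace ℝ := ⟨gaussianReal 0 ν⟩
  haveI : SigmaFinite (volume : Measure ℝ) := by
    show SigmaFinite (gaussianReal 0 ν)
    infer_instance
  have hμvol : μ = (volume : Measure (Fin n → ℝ)) := by rw [hμ]; rfl
  set f : Fin n → ℝ → ℂ := fun k x =>
    (if k = i then (if i = j then (x:ℂ)^2 else (x:ℂ)) else if k = j then (x:ℂ) else 1)
      * Complex.exp (I * (δ k) * x) with hf
  -- pointwise product formula
  have hprod : ∀ w : Fin n → ℝ,
      ((w i : ℂ)) * (w j) * Complex.exp (I * ((∑ k, w k * δ k : ℝ) : ℂ))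
        = ∏ k, f k (w k) := by
    intro w
    have hexp : Complex.exp (I * ((∑ k, w k * δ k : ℝ) : ℂ))
        = ∏ k, Complex.exp (I * (δ k) * (w k)) := by
      rw [← Complex.exp_sum]
      congr 1
      push_cast
      rw [Finset.mul_sum]
      exact Finset.sum_congr rfl fun k _ => by ring
    rw [hf]
    simp only
    rw [Finset.prod_mul_distrib, ← hexp]
    congr 1
    by_cases hij : i = j
    · subst hij
      rw [Finset.prod_eq_single i (fun k _ hk => by simp [hk]) (by simp)]
      simp [sq]
    · have : ∀ k, (if k = i then (if i = j then ((w k : ℂ))^2 else (w k : ℂ))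
          else if k = j then ((w k : ℂ)) else 1)
          = (if k = i then ((w k : ℂ)) else 1) * (if k = j then ((w k : ℂ)) else 1) := by
        intro k
        have hji : ¬ j = i := fun h => hij h.symm
        by_cases h1 : k = i
        · subst h1
          simp [hij]
        · by_cases h2 : k = j
          · subst h2
            simp [hji, h1]
          · simp [h1, h2]
      simp only [this]
      rw [Finset.prod_mul_distrib, Finset.prod_ite_eq' Finset.univ i (fun k => ((w k : ℂ))),
        Finset.prod_ite_eq' Finset.univ j (fun k => ((w k : ℂ)))]
      simp
  -- integrability of factors
  have hfint : ∀ k, Integrable (f k) (gaussianReal 0 ν) := by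
    intro k
    rw [hf]
    simp only
    by_cases h1 : k = i
    · by_cases h2 : i = j
      · simp only [if_pos h1, if_pos h2]
        simpa using gauss_integrable ν hνpos 2 (δ k)
      · simp only [if_pos h1, if_neg h2]
        simpa using gauss_integrable ν hνpos 1 (δ k)
    · by_cases h2 : k = j
      · simp only [if_neg h1, if_pos h2]
        simpa using gauss_integrable ν hνpos 1 (δ k)
      · simp only [if_neg h1, if_neg h2]
        simpa using gauss_integrable ν hνpos 0 (δ k)
  -- value of each factor integral
  have hkint : ∀ k, ∫ x, f k x ∂(gaussianReal 0 ν)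
      = (if k = i then (if i = j then (((ν:ℝ):ℂ) - ((ν:ℝ):ℂ)^2 * (δ i)^2)
            else I * (δ i) * (ν:ℝ))
          else if k = j then I * (δ j) * (ν:ℝ) else 1)
        * ((Real.exp (-(ν:ℝ) * (δ k)^2 / 2) : ℝ) : ℂ) := by
    intro k
    rw [hf]
    simp only
    by_cases h1 : k = i
    · subst h1
      by_cases h2 : k = j
      · simp only [if_pos rfl, if_pos h2]
        have := gauss2 ν hνpos (δ k)
        simp only [h2] at this ⊢
        simpa using this
      · simp only [if_pos rfl, if_neg h2]
        simpa using gauss1 ν hνpos (δ k)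
    · by_cases h2 : k = j
      · subst h2
        simp only [if_neg h1, if_pos rfl]
        simpa using gauss1 ν hνpos (δ k)
      · simp only [if_neg h1, if_neg h2]
        simpa using gauss0 ν hνpos (δ k)
  -- main computation
  have hIntProd : Integrable (fun w : Fin n → ℝ => ∏ k, f k (w k)) volume :=
    Integrable.fintype_prod (f := f) (fun k => hfint k)
  have step1 : ∫ w, w i * w j * Real.cos (∑ k, w k * δ k) ∂μ
      = (∫ w : Fin n → ℝ, ∏ k, f k (w k)).re := by
    rw [hμvol]
    have h2 : ∀ w : Fin n → ℝ, w i * w j * Real.cos (∑ k, w k * δ k)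
        = RCLike.re (∏ k, f k (w k)) := by
      intro w
      rw [RCLike.re_to_complex, ← hprod w, ← Complex.ofReal_mul, Complex.re_ofReal_mul,
        mul_comm I, Complex.exp_ofReal_mul_I_re]
    simp_rw [h2]
    rw [_root_.integral_re hIntProd, RCLike.re_to_complex]
  rw [step1, MeasureTheory.integral_fintype_prod_volume_eq_prod (fun k => f k)]
  have : ∀ k, (∫ x, f k x) = ∫ x, f k x ∂(gaussianReal 0 ν) := fun k => rfl
  rw [Finset.prod_congr rfl fun k _ => (this k).trans (hkint k), Finset.prod_mul_distrib]
  have hE : (∏ k, ((Real.exp (-(ν:ℝ) * (δ k)^2 / 2) : ℝ) : ℂ))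
      = ((Real.exp (-(ν:ℝ) * (∑ k, (δ k)^2) / 2) : ℝ) : ℂ) := by
    rw [← Complex.ofReal_prod]
    congr 1
    rw [← Real.exp_sum]
    congr 1
    conv_rhs => rw [Finset.mul_sum, Finset.sum_div]
    try exact Finset.sum_congr rfl fun k _ => by ring
  rw [hE]
  -- compute the product of the coefficient factors
  by_cases hij : i = j
  · subst hij
    rw [Finset.prod_eq_single i (fun k _ hk => by simp [hk]) (by simp)]
    simp only [eq_self_iff_true, if_true]
    -- take real part
    rw [show (((ν:ℝ):ℂ) - ((ν:ℝ):ℂ)^2 * (δ i)^2) * ((Real.exp (-(ν:ℝ) * (∑ k, (δ k)^2) / 2) : ℝ) : ℂ)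
        = ((((ν:ℝ) - (ν:ℝ)^2 * (δ i)^2) * Real.exp (-(ν:ℝ) * (∑ k, (δ k)^2) / 2) : ℝ) : ℂ) by
      push_cast; ring]
    rw [Complex.ofReal_re]
    rw [hνr]
    have hσ0 : σ ≠ 0 := hσ.ne'
    try simp only [eq_self_iff_true, if_true]
    have harg : -(σ^2)⁻¹ * (∑ k, (δ k)^2) / 2 = -(∑ k, δ k ^ 2) / (2 * σ ^ 2) := by
      rw [neg_mul, neg_div, inv_mul_eq_div, div_div, mul_comm (σ^2) 2]
      exact (neg_div _ _).symm
    rw [harg]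
    ring
  · simp only [if_neg hij]
    have hcoef : ∀ k, (if k = i then I * ((δ i):ℂ) * ((ν:ℝ):ℂ)
          else if k = j then I * ((δ j):ℂ) * ((ν:ℝ):ℂ) else 1)
        = (if k = i then I * ((δ i):ℂ) * ((ν:ℝ):ℂ) else 1)
          * (if k = j then I * ((δ j):ℂ) * ((ν:ℝ):ℂ) else 1) := by
      intro k
      have hji : ¬ j = i := fun h => hij h.symm
      by_cases h1 : k = i
      · subst h1
        simp [hij]
      · by_cases h2 : k = j
        · subst h2
          simp [hji, h1]
        · simp [h1, h2]
    simp only [hcoef]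
    rw [Finset.prod_mul_distrib,
      Finset.prod_ite_eq' Finset.univ i (fun _ => I * (δ i) * ((ν:ℝ):ℂ)),
      Finset.prod_ite_eq' Finset.univ j (fun _ => I * (δ j) * ((ν:ℝ):ℂ))]
    try simp only [Finset.mem_univ, if_true]
    have hEc : (((-((δ i) * (δ j) * (ν:ℝ)^2)) * Real.exp (-(ν:ℝ) * (∑ k, (δ k)^2) / 2) : ℝ) : ℂ)
        = -(((δ i):ℂ) * ((δ j):ℂ) * ((ν:ℝ):ℂ)^2)
          * ((Real.exp (-(ν:ℝ) * (∑ k, (δ k)^2) / 2) : ℝ) : ℂ) := by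
      rw [Complex.ofReal_mul, Complex.ofReal_neg, Complex.ofReal_mul, Complex.ofReal_mul,
        Complex.ofReal_pow]
    rw [show (I * ((δ i):ℂ) * ((ν:ℝ):ℂ)) * (I * ((δ j):ℂ) * ((ν:ℝ):ℂ))
          * ((Real.exp (-(ν:ℝ) * (∑ k, (δ k)^2) / 2) : ℝ) : ℂ)
        = (((-((δ i) * (δ j) * (ν:ℝ)^2)) * Real.exp (-(ν:ℝ) * (∑ k, (δ k)^2) / 2) : ℝ) : ℂ) by
      rw [hEc]
      linear_combination (((δ i):ℂ) * ((δ j):ℂ) * ((ν:ℝ):ℂ)^2 *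
        ((Real.exp (-(ν:ℝ) * (∑ k, (δ k)^2) / 2) : ℝ) : ℂ)) * Complex.I_mul_I]
    rw [Complex.ofReal_re, hνr]
    have hσ0 : σ ≠ 0 := hσ.ne'
    have harg : -(σ^2)⁻¹ * (∑ k, (δ k)^2) / 2 = -(∑ k, δ k ^ 2) / (2 * σ ^ 2) := by
      rw [neg_mul, neg_div, inv_mul_eq_div, div_div, mul_comm (σ^2) 2]
      exact (neg_div _ _).symm
    rw [harg]
    field_simp
    ring
end
end
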